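/- arXiv:1509.07832 — 6 statements merged into one kernel-verified Lean document; each statement's English description precedes it below -/
import Mathlib

section
/- Let a = 2k and b = a(n+1) - 2, where k ≥ 1 and n ≥ 1 are integers. Then the number of (a,b)-Dyck paths satisfies |D_{a,b}| = C⁻(a,n) − Σ_{j=1}^{k−1} C⁻(a−j,n)·C⁻(j,n), where C⁻(t,n) := (1/(t + t(n+1) − 1))·binom(t + t(n+1) − 1, t) is the number of Dyck paths in the t × (t(n+1)−1) rectangle (with the convention C⁻(1,n) = 1). -/
/-!
For `0 < l < 2k` one has `⌊(2k(n+1) - 2) l / 2k⌋ = l(n+1) - 1` if `l ≤ k` and `l(n+1) - 2`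
otherwise. Hence the `(2k, 2k(n+1) - 2)`-Dyck paths are the `(2k, 2k(n+1) - 1)`-Dyck paths that
never touch their boundary at an abscissa `l > k`. Cutting a path that does touch there at its
last touch `m` leaves a pair of Dyck paths of sizes `m` and `2k - m`, which accounts for the sum.

That `C⁻(t, n)` counts the `(t, t(n+2) - 1)`-Dyck paths is the cycle lemma: with `s = n + 1`, a
cyclic word of length `N = t(s+1) - 1` with `t` letters of weight `s` and `N - t` of weight `-1`
has total weight `1`, so exactly one of its `N` rotations has all its nonempty prefix sums
positive, and the words read from such a rotation are the Dyck paths. Thus `N` times the number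
of Dyck paths is `binom(N, t)`.
-/

/-- The number of `(a,b)`-Dyck paths: lattice paths from `(0,a)` to `(b,0)` with unit
south and east steps staying weakly below the segment joining these points, encoded as
weakly increasing sequences `c_1 ≤ … ≤ c_{a-1}` of naturals with `c_l ≤ ⌊b*l/a⌋`. -/
noncomputable def dyckCount (a b : ℕ) : ℕ :=
  Nat.card {c : Fin (a - 1) → ℕ //
    Monotone c ∧ ∀ l : Fin (a - 1), c l ≤ b * (l.1 + 1) / a}

/-- `C⁻(t,n)`: the number of Dyck paths in the `t × (t(n+1)-1)` rectangle,
given by the rational expression `(1/(t + t(n+1) - 1)) * binom(t + t(n+1) - 1, t)`. -/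
noncomputable def Cminus (t n : ℕ) : ℚ :=
  ((t + t * (n + 1) - 1).choose t : ℚ) / ((t + t * (n + 1) - 1 : ℕ) : ℚ)

open Finset

lemma StrictMono.add_sub_le {t : ℕ} {p : Fin t → ℕ} (hp : StrictMono p) {i j : Fin t}
    (hij : i ≤ j) : p i + (j - i : ℕ) ≤ p j := by
  obtain ⟨d, hd⟩ := Nat.exists_eq_add_of_le (Fin.le_def.1 hij)
  induction d generalizing j with
  | zero => simp [Fin.ext (hd.trans (add_zero _))]
  | succ d ih =>
    have hj : (i : ℕ) + d < t := by omega
    have h₁ := ih (j := ⟨i + d, hj⟩) (Fin.le_def.2 (by simp)) rfl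
    have h₂ := hp (show (⟨i + d, hj⟩ : Fin t) < j from Fin.lt_def.2 (by simp only; omega))
    simp only at h₁
    omega

lemma Nat.card_subtype_eq_card_and_add_card_and_not {α : Type*} (P Q : α → Prop)
    [Finite {x // P x}] :
    Nat.card {x // P x} = Nat.card {x // P x ∧ Q x} + Nat.card {x // P x ∧ ¬ Q x} := by
  classical
  rw [Nat.card_congr (Equiv.sumCompl fun x : {x // P x} => Q x).symm, Nat.card_sum,
    Nat.card_congr (Equiv.subtypeSubtypeEquivSubtypeInter P Q),
    Nat.card_congr (Equiv.subtypeSubtypeEquivSubtypeInter P fun x => ¬ Q x)]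

lemma Nat.card_subtype_exists_mem_eq_sum {α ι : Type*} (M : Finset ι) (Q : ι → α → Prop)
    (hQ : ∀ x i j, Q i x → Q j x → i = j) [∀ i, Finite {x // Q i x}] :
    Nat.card {x // ∃ i ∈ M, Q i x} = ∑ i ∈ M, Nat.card {x // Q i x} := by
  rw [← sum_coe_sort, ← Nat.card_sigma]
  refine (Nat.card_eq_of_bijective (fun y : Σ i : M, {x // Q i x} =>
    (⟨y.2.1, y.1, y.1.2, y.2.2⟩ : {x // ∃ i ∈ M, Q i x})) ⟨?_, ?_⟩).symm
  · rintro ⟨i, x, hx⟩ ⟨j, y, hy⟩ h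
    obtain rfl : x = y := congrArg Subtype.val h
    obtain rfl := Subtype.ext (hQ x i j hx hy)
    rfl
  · rintro ⟨x, i, hi, hx⟩
    exact ⟨⟨⟨i, hi⟩, x, hx⟩, rfl⟩

namespace RationalDyck

/-- `IsDyck t s` is the condition in `dyckCount t (t * s - 1)`, written with
`⌊(t s - 1)(l + 1) / t⌋ = (l + 1) s - 1`. -/
def IsDyck (t s : ℕ) (c : Fin (t - 1) → ℕ) : Prop :=
  Monotone c ∧ ∀ l : Fin (t - 1), c l ≤ (l + 1) * s - 1

instance IsDyck.finite (t s : ℕ) : Finite {c : Fin (t - 1) → ℕ // IsDyck t s c} := by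
  refine Finite.of_injective (fun c l => (⟨c.1 l, ?_⟩ : Fin (t * s + 1))) fun c c' h =>
    Subtype.ext (funext fun l => congrArg Fin.val (congrFun h l))
  have := c.2.2 l
  have := Nat.mul_le_mul_right s (show (l : ℕ) + 1 ≤ t by omega)
  omega

section CyclicWalk

variable {N : ℕ}

/- A finset `S` of `ZMod N` is a cyclic word of length `N` whose south steps sit at `S`.
Read from `r`, a south step raises the walk by `s` and an east step lowers it by `1`;
`height s S r y` is its height after `y` steps. -/

def windowCount (S : Finset (ZMod N)) (r : ZMod N) (y : ℕ) : ℕ :=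
  #{i ∈ range y | r + ((i : ℕ) : ZMod N) ∈ S}

lemma windowCount_add (S : Finset (ZMod N)) (r : ZMod N) (y z : ℕ) :
    windowCount S r (y + z) = windowCount S r y + windowCount S (r + y) z := by
  simp only [windowCount, card_filter, sum_range_add, Nat.cast_add, add_assoc]

lemma windowCount_self [NeZero N] (S : Finset (ZMod N)) (r : ZMod N) :
    windowCount S r N = #S := by
  refine card_nbij' (fun i => r + i) (fun x => (x - r).val) ?_ ?_ ?_ ?_
  · intro i hi
    exact (mem_filter.1 hi).2
  · intro x hx
    simpa [ZMod.val_lt] using hx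
  · intro i hi
    simpa using ZMod.val_cast_of_lt (mem_range.1 (mem_filter.1 hi).1)
  · intro x _
    simp

lemma windowCount_image_add (S : Finset (ZMod N)) (a r : ZMod N) (y : ℕ) :
    windowCount (S.image (· + a)) (r + a) y = windowCount S r y := by
  simp only [windowCount, mem_image, add_right_comm r a, add_left_inj, exists_eq_right]

def height (s : ℕ) (S : Finset (ZMod N)) (r : ZMod N) (y : ℕ) : ℤ :=
  (s + 1) * windowCount S r y - y

lemma height_add (s : ℕ) (S : Finset (ZMod N)) (r : ZMod N) (y z : ℕ) :
    height s S r (y + z) = height s S r y + height s S (r + y) z := by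
  simp only [height, windowCount_add]
  push_cast
  ring

lemma height_self [NeZero N] {s : ℕ} {S : Finset (ZMod N)} (hS : #S * (s + 1) = N + 1)
    (r : ZMod N) : height s S r N = 1 := by
  have : (#S : ℤ) * (s + 1) = N + 1 := by exact_mod_cast hS
  simp only [height, windowCount_self]
  linear_combination this

def PositiveFrom (s : ℕ) (S : Finset (ZMod N)) (r : ZMod N) : Prop :=
  ∀ y, 1 ≤ y → y ≤ N → 0 < height s S r y

lemma positiveFrom_image_add_iff (s : ℕ) (S : Finset (ZMod N)) (a r : ZMod N) :
    PositiveFrom s (S.image (· + a)) (r + a) ↔ PositiveFrom s S r := by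
  simp only [PositiveFrom, height, windowCount_image_add]

lemma positiveFrom_iff_height_lt [NeZero N] (s : ℕ) (S : Finset (ZMod N)) (r : ZMod N) :
    PositiveFrom s S r ↔
      ∀ y, 1 ≤ y → y ≤ N → height s S 0 r.val < height s S 0 (r.val + y) := by
  simp only [PositiveFrom, height_add s S 0 r.val, zero_add, ZMod.natCast_zmod_val,
    lt_add_iff_pos_right]

lemma height_add_self [NeZero N] {s : ℕ} {S : Finset (ZMod N)} (hS : #S * (s + 1) = N + 1)
    (y : ℕ) : height s S 0 (y + N) = height s S 0 y + 1 := by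
  rw [height_add, height_self hS]

lemma positiveFrom_unique [NeZero N] {s : ℕ} {S : Finset (ZMod N)}
    (hS : #S * (s + 1) = N + 1) {u v : ZMod N} (hu : PositiveFrom s S u)
    (hv : PositiveFrom s S v) : u = v := by
  -- the rises from `u` to `v` and from `v` to `u + N` would both be positive, yet sum to `1`
  have key : ∀ {u v}, PositiveFrom s S u → PositiveFrom s S v → ¬ u.val < v.val := by
    intro u v hu hv huv
    have hvN := ZMod.val_lt v
    have h₁ := (positiveFrom_iff_height_lt s S u).1 hu (v.val - u.val) (by omega) (by omega)
    have h₂ := (positiveFrom_iff_height_lt s S v).1 hv (u.val + N - v.val) (by omega) (by omega)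
    rw [Nat.add_sub_cancel' huv.le] at h₁
    rw [show v.val + (u.val + N - v.val) = u.val + N by omega, height_add_self hS] at h₂
    omega
  exact ZMod.val_injective N (le_antisymm (not_lt.1 (key hv hu)) (not_lt.1 (key hu hv)))

lemma existsUnique_positiveFrom [NeZero N] {s : ℕ} {S : Finset (ZMod N)}
    (hS : #S * (s + 1) = N + 1) : ∃! r, PositiveFrom s S r := by
  set H := height s S 0
  -- minimising `N * H y - y` over one period picks the last minimum of `H`
  obtain ⟨m, hm, hmin⟩ := exists_min_image (range N) (fun y => (N : ℤ) * H y - y)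
    (nonempty_range_iff.2 (NeZero.ne N))
  have hmN := mem_range.1 hm
  have hpos : PositiveFrom s S m := by
    rw [positiveFrom_iff_height_lt, ZMod.val_cast_of_lt hmN]
    intro y hy₁ hyN
    by_contra! hle
    rcases lt_or_ge (m + y) N with hlt | hge
    · have := hmin (m + y) (mem_range.2 hlt)
      have := mul_le_mul_of_nonneg_left hle (Nat.cast_nonneg (α := ℤ) N)
      push_cast at *
      linarith
    · have := hmin (m + y - N) (mem_range.2 (by omega))
      rw [show m + y = m + y - N + N by omega, height_add_self hS] at hle
      have := mul_le_mul_of_nonneg_left hle (Nat.cast_nonneg (α := ℤ) N)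
      push_cast [Nat.cast_sub hge] at *
      linarith
  exact ⟨m, hpos, fun r hr => positiveFrom_unique hS hr hpos⟩

lemma mul_card_positiveFrom_zero [NeZero N] {s t : ℕ} (hN : t * (s + 1) = N + 1) :
    N * Nat.card {S : Finset (ZMod N) // #S = t ∧ PositiveFrom s S 0} = N.choose t := by
  have hcard : ∀ (S : Finset (ZMod N)) (r : ZMod N), #(S.image (· + r)) = #S := fun S r =>
    card_image_of_injective _ (add_left_injective r)
  have hpos : ∀ (S : Finset (ZMod N)) (r : ZMod N),
      PositiveFrom s S 0 → PositiveFrom s (S.image (· + r)) r := fun S r hS => by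
    simpa using (positiveFrom_image_add_iff s S r 0).2 hS
  let rotate (x : ZMod N × {S : Finset (ZMod N) // #S = t ∧ PositiveFrom s S 0}) :
      {S : Finset (ZMod N) // #S = t} :=
    ⟨x.2.1.image (· + x.1), by rw [hcard, x.2.2.1]⟩
  have hbij : Function.Bijective rotate := by
    constructor
    · intro ⟨r, S, hSt, hS⟩ ⟨r', S', _, hS'⟩ hrot
      have h : S.image (· + r) = S'.image (· + r') := congrArg Subtype.val hrot
      have hr' := hpos S' r' hS'
      rw [← h] at hr'
      obtain rfl := positiveFrom_unique (by rw [hcard, hSt, hN]) (hpos S r hS) hr'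
      obtain rfl := image_injective (add_left_injective r) h
      rfl
    · rintro ⟨S, hSt⟩
      obtain ⟨r, hr, -⟩ := existsUnique_positiveFrom (s := s) (S := S) (by rw [hSt, hN])
      refine ⟨(r, ⟨S.image (· + -r), by rw [hcard, hSt], ?_⟩), ?_⟩
      · simpa using (positiveFrom_image_add_iff s S (-r) r).2 hr
      · ext1
        change (S.image (· + -r)).image (· + r) = S
        rw [image_image]
        simp [Function.comp_def]
  have := Nat.card_eq_of_bijective rotate hbij
  rw [Nat.card_prod, Nat.card_zmod] at this
  rw [this, Nat.card_eq_fintype_card, Fintype.card_finset_len, ZMod.card]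

end CyclicWalk

section Positions

lemma lt_iff_lt_card_filter_lt {t : ℕ} {p : Fin t → ℕ} (hp : Monotone p) (j : Fin t)
    (y : ℕ) : p j < y ↔ (j : ℕ) < #{i | p i < y} := by
  constructor
  · intro hj
    calc (j : ℕ) < #(Iic j) := by simp
      _ ≤ #{i | p i < y} := card_le_card fun i hi => by
          simpa using (hp (mem_Iic.1 hi)).trans_lt hj
  · intro hj
    by_contra! hyj
    have : #{i | p i < y} ≤ #(Iio j) := card_le_card fun i hi => by
      simp only [mem_filter, mem_univ, true_and] at hi
      exact mem_Iio.2 (lt_of_not_ge fun hji => (hyj.trans (hp hji)).not_gt hi)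
    simp only [Fin.card_Iio] at this
    omega

variable {N : ℕ}

lemma windowCount_image_natCast {t : ℕ} {p : Fin t → ℕ} (hp : Function.Injective p)
    (hpN : ∀ j, p j < N) {y : ℕ} (hy : y ≤ N) :
    windowCount (univ.image fun j => (p j : ZMod N)) 0 y = #{j | p j < y} := by
  rw [windowCount, ← card_image_of_injective _ hp]
  congr 1
  ext i
  simp only [mem_filter, mem_range, zero_add, mem_image, mem_univ, true_and]
  constructor
  · rintro ⟨hi, j, hj⟩
    rw [ZMod.natCast_eq_natCast_iff', Nat.mod_eq_of_lt (hpN j), Nat.mod_eq_of_lt (by omega)] at hj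
    exact ⟨j, hj ▸ hi, hj⟩
  · rintro ⟨j, hj, rfl⟩
    exact ⟨hj, j, rfl⟩

lemma positiveFrom_zero_iff [NeZero N] {s t : ℕ} (hN : t * (s + 1) = N + 1) {p : Fin t → ℕ}
    (hp : StrictMono p) (hpN : ∀ j, p j < N) :
    PositiveFrom s (univ.image fun j => (p j : ZMod N)) 0 ↔
      ∀ j : Fin t, p j ≤ j * (s + 1) - 1 := by
  have hcount := fun y (hy : y ≤ N) => windowCount_image_natCast hp.injective hpN hy
  have hpos : ∀ y, 1 ≤ y → y ≤ N →
      (0 < height s (univ.image fun j => (p j : ZMod N)) 0 y ↔ y < #{j | p j < y} * (s + 1)) :=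
    fun y _ hy => by
    rw [height, hcount y hy, sub_pos, mul_comm]
    norm_cast
  constructor
  · intro h j
    by_contra! hj
    set y := (j : ℕ) * (s + 1) - 1 + 1
    have hjN : (j : ℕ) * (s + 1) + (s + 1) ≤ N + 1 := by
      rw [← hN, ← add_one_mul]
      exact Nat.mul_le_mul_right _ j.2
    have hyN : y ≤ N := by
      have := NeZero.one_le (n := N)
      omega
    have hK : #{i | p i < y} ≤ j := not_lt.1 fun h' =>
      ((lt_iff_lt_card_filter_lt hp.monotone j y).2 h').not_ge (by omega)
    have := (hpos y le_add_self hyN).1 (h y le_add_self hyN)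
    have := Nat.mul_le_mul_right (s + 1) hK
    omega
  · intro h y hy₁ hyN
    rw [hpos y hy₁ hyN]
    set m := #{i | p i < y}
    rcases lt_or_ge m t with hm | hm
    · have hbound : p ⟨m, hm⟩ ≤ m * (s + 1) - 1 := h ⟨m, hm⟩
      have hge : ¬ p ⟨m, hm⟩ < y := fun h' =>
        lt_irrefl m ((lt_iff_lt_card_filter_lt hp.monotone ⟨m, hm⟩ y).1 h')
      omega
    · have := Nat.mul_le_mul_right (s + 1) hm
      omega

/-- `p j` is the position of the `j`-th south step; the truncated subtraction forces
`p 0 = 0`. -/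
def IsDyckPos (t s : ℕ) (p : Fin t → ℕ) : Prop :=
  StrictMono p ∧ ∀ j : Fin t, p j ≤ j * (s + 1) - 1

lemma IsDyckPos.lt [NeZero N] {t s : ℕ} (hN : t * (s + 1) = N + 1) {p : Fin t → ℕ}
    (hp : IsDyckPos t s p) (j : Fin t) : p j < N := by
  have := hp.2 j
  have : ((j : ℕ) + 1) * (s + 1) ≤ t * (s + 1) := Nat.mul_le_mul_right _ j.2
  rw [add_one_mul] at this
  have := NeZero.one_le (n := N)
  omega

lemma card_isDyckPos_eq [NeZero N] {s t : ℕ} (hN : t * (s + 1) = N + 1) :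
    Nat.card {p : Fin t → ℕ // IsDyckPos t s p} =
      Nat.card {S : Finset (ZMod N) // #S = t ∧ PositiveFrom s S 0} := by
  have hval : ∀ p : {p // IsDyckPos t s p},
      (univ.image fun j => (p.1 j : ZMod N)).image ZMod.val = univ.image p.1 := fun p => by
    rw [image_image]
    exact image_congr fun j _ => ZMod.val_cast_of_lt (p.2.lt hN j)
  refine Nat.card_eq_of_bijective (fun p => ⟨univ.image fun j => (p.1 j : ZMod N), ?_, ?_⟩)
    ⟨?_, ?_⟩
  · rw [← card_image_of_injective _ (ZMod.val_injective N), hval,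
      card_image_of_injective _ p.2.1.injective, card_fin]
  · exact (positiveFrom_zero_iff hN p.2.1 (p.2.lt hN)).2 p.2.2
  · intro p q hpq
    have := congrArg (fun S => (S.1 : Finset (ZMod N)).image ZMod.val) hpq
    simp only [hval] at this
    exact Subtype.ext ((p.2.1.range_inj q.2.1).1
      (by simpa [Set.ext_iff, Finset.ext_iff] using this))
  · rintro ⟨S, hSt, hS⟩
    have hV : #(S.image ZMod.val) = t := by
      rw [card_image_of_injective _ (ZMod.val_injective N), hSt]
    set q := (S.image ZMod.val).orderEmbOfFin hV
    have hqN : ∀ j, q j < N := fun j => by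
      obtain ⟨x, -, hx⟩ := mem_image.1 (orderEmbOfFin_mem _ hV j)
      exact hx ▸ ZMod.val_lt x
    have himage : univ.image (fun j => (q j : ZMod N)) = S := by
      change univ.image (((↑) : ℕ → ZMod N) ∘ q) = S
      rw [← image_image, image_orderEmbOfFin_univ, image_image]
      simp
    exact ⟨⟨q, q.strictMono, (positiveFrom_zero_iff hN q.strictMono hqN).1 (himage ▸ hS)⟩,
      Subtype.ext himage⟩

end Positions

lemma IsDyck.isDyckPos_cons {u s : ℕ} (hs : 0 < s) {c : Fin (u + 1 - 1) → ℕ}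
    (hc : IsDyck (u + 1) s c) : IsDyckPos (u + 1) s (Fin.cons 0 fun l => c l + l + 1) := by
  refine ⟨fun i j hij => ?_, fun j => ?_⟩
  · induction i using Fin.cases <;> induction j using Fin.cases
    · exact absurd hij (lt_irrefl 0)
    · simp
    · exact absurd hij (Fin.not_lt_zero _)
    · rw [Fin.succ_lt_succ_iff] at hij
      have := hc.1 hij.le
      simp only [Fin.cons_succ, Fin.lt_def] at hij ⊢
      omega
  · induction j using Fin.cases
    · simp
    · rename_i l
      have := hc.2 l
      have : 0 < ((l : ℕ) + 1) * s := Nat.mul_pos l.succ_pos hs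
      simp only [Fin.cons_succ, Fin.val_succ, mul_add_one]
      omega

lemma IsDyckPos.isDyck_succ_sub {u s : ℕ} {p : Fin (u + 1) → ℕ} (hp : IsDyckPos (u + 1) s p) :
    IsDyck (u + 1) s fun l : Fin u => p l.succ - (l + 1) := by
  refine ⟨fun l l' hll => ?_, fun l => ?_⟩
  · have := hp.1.add_sub_le (Fin.succ_le_succ_iff.2 hll)
    rw [Fin.le_def] at hll
    simp only [Fin.val_succ] at this ⊢
    omega
  · have := hp.2 l.succ
    simp only [Fin.val_succ, mul_add_one] at this ⊢
    omega

lemma card_isDyck_eq_card_isDyckPos {u s : ℕ} (hs : 0 < s) :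
    Nat.card {c : Fin (u + 1 - 1) → ℕ // IsDyck (u + 1) s c} =
      Nat.card {p : Fin (u + 1) → ℕ // IsDyckPos (u + 1) s p} := by
  refine Nat.card_congr
    { toFun c := ⟨_, c.2.isDyckPos_cons hs⟩
      invFun p := ⟨_, p.2.isDyck_succ_sub⟩
      left_inv c := Subtype.ext (funext fun l => by simp)
      right_inv p := Subtype.ext (funext fun j => ?_) }
  induction j using Fin.cases
  · have := p.2.2 0
    simp_all
  · rename_i l
    have := p.2.1.add_sub_le (Fin.zero_le l.succ)
    simp only [Fin.cons_succ, Fin.val_succ, Fin.val_zero] at this ⊢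
    omega

theorem mul_card_isDyck {t s : ℕ} (ht : 0 < t) (hs : 0 < s) :
    (t * (s + 1) - 1) * Nat.card {c : Fin (t - 1) → ℕ // IsDyck t s c} =
      (t * (s + 1) - 1).choose t := by
  obtain ⟨u, rfl⟩ := Nat.exists_eq_add_one_of_ne_zero ht.ne'
  have h₂ : 2 ≤ (u + 1) * (s + 1) := Nat.mul_le_mul (Nat.le_add_left 1 u) (Nat.succ_le_succ hs)
  have hN : (u + 1) * (s + 1) = (u + 1) * (s + 1) - 1 + 1 := by omega
  have : NeZero ((u + 1) * (s + 1) - 1) := ⟨by omega⟩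
  rw [card_isDyck_eq_card_isDyckPos hs, card_isDyckPos_eq hN, mul_card_positiveFrom_zero hN]

lemma card_isDyck_eq_Cminus {t : ℕ} (ht : 0 < t) (n : ℕ) :
    (Nat.card {c : Fin (t - 1) → ℕ // IsDyck t (n + 1) c} : ℚ) = Cminus t n := by
  have h := mul_card_isDyck ht n.succ_pos
  have h₂ : 2 ≤ t * (n + 1 + 1) := by nlinarith
  have hne : ((t * (n + 1 + 1) - 1 : ℕ) : ℚ) ≠ 0 := by norm_cast; omega
  rw [Cminus, show t + t * (n + 1) = t * (n + 1 + 1) by ring, eq_div_iff hne, mul_comm]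
  exact_mod_cast h

lemma two_mul_mul_sub_two_mul_div {k s m : ℕ} (hs : 0 < s) (hm : 0 < m) (hmk : m < 2 * k) :
    (2 * k * s - 2) * m / (2 * k) = if m ≤ k then m * s - 1 else m * s - 2 := by
  have e₁ : (2 * k * s - 2) * m = 2 * (k * (m * s)) - 2 * m := by
    rw [Nat.sub_mul]; ring_nf
  have hms : m ≤ m * s := Nat.le_mul_of_pos_right m hs
  have hX : m * s ≤ k * (m * s) := Nat.le_mul_of_pos_left _ (by omega)
  split_ifs with h
  · have e₂ : (m * s - 1) * (2 * k) = 2 * (k * (m * s)) - 2 * k := by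
      rw [Nat.sub_mul]; ring_nf
    have e₃ : (m * s - 1 + 1) * (2 * k) = 2 * (k * (m * s)) := by
      rw [Nat.sub_add_cancel (by omega)]; ring
    exact Nat.div_eq_of_lt_le (by omega) (by omega)
  · have e₂ : (m * s - 2) * (2 * k) = 2 * (k * (m * s)) - 4 * k := by
      rw [Nat.sub_mul]; ring_nf
    have e₃ : (m * s - 2 + 1) * (2 * k) = 2 * (k * (m * s)) - 2 * k := by
      rw [show m * s - 2 + 1 = m * s - 1 by omega, Nat.sub_mul]; ring_nf
    exact Nat.div_eq_of_lt_le (by omega) (by omega)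

lemma dyckCount_two_mul_eq_card {k s : ℕ} (hs : 0 < s) :
    dyckCount (2 * k) (2 * k * s - 2) = Nat.card {c : Fin (2 * k - 1) → ℕ //
      IsDyck (2 * k) s c ∧ ¬ ∃ l : Fin (2 * k - 1), k ≤ l ∧ c l = (l + 1) * s - 1} := by
  refine Nat.card_congr (Equiv.subtypeEquivRight fun c => ?_)
  have hfloor (l : Fin (2 * k - 1)) : (2 * k * s - 2) * (l + 1) / (2 * k) =
      if (l : ℕ) + 1 ≤ k then (l + 1) * s - 1 else (l + 1) * s - 2 :=
    two_mul_mul_sub_two_mul_div hs l.1.succ_pos (by omega)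
  have hle (l : Fin (2 * k - 1)) : (l : ℕ) + 1 ≤ (l + 1) * s := Nat.le_mul_of_pos_right _ hs
  simp only [IsDyck, hfloor, not_exists, not_and]
  constructor
  · rintro ⟨hmono, hc⟩
    refine ⟨⟨hmono, fun l => ?_⟩, fun l hl => ?_⟩ <;>
    · have hcl := hc l
      have := hle l
      split_ifs at hcl <;> omega
  · rintro ⟨⟨hmono, hc⟩, hk⟩
    refine ⟨hmono, fun l => ?_⟩
    have := hc l
    split_ifs with h
    · exact this
    · have := hk l (by omega)
      omega

def LastTouchAt {a : ℕ} (s m : ℕ) (c : Fin (a - 1) → ℕ) : Prop :=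
  (∃ l : Fin (a - 1), (l : ℕ) + 1 = m ∧ c l = m * s - 1) ∧
    ∀ l : Fin (a - 1), m ≤ l → c l ≠ (l + 1) * s - 1

section Glue

def glue (a s m : ℕ) (p : Fin (m - 1) → ℕ) (d : Fin (a - m - 1) → ℕ) (l : Fin (a - 1)) :
    ℕ :=
  if h : (l : ℕ) + 1 < m then p ⟨l, by omega⟩
  else if h' : m ≤ l then d ⟨l - m, by omega⟩ + (m * s - 1)
  else m * s - 1

variable {a s m : ℕ} {p : Fin (m - 1) → ℕ} {d : Fin (a - m - 1) → ℕ}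

lemma glue_of_lt {l : Fin (a - 1)} (h : (l : ℕ) + 1 < m) :
    glue a s m p d l = p ⟨l, by omega⟩ :=
  dif_pos h

lemma glue_of_ge {l : Fin (a - 1)} (h : m ≤ l) :
    glue a s m p d l = d ⟨l - m, by omega⟩ + (m * s - 1) := by
  rw [glue, dif_neg (by omega), dif_pos h]

lemma glue_of_eq {l : Fin (a - 1)} (h : (l : ℕ) + 1 = m) : glue a s m p d l = m * s - 1 := by
  rw [glue, dif_neg (by omega), dif_neg (by omega)]

lemma glue_le (hp : IsDyck m s p) {l : Fin (a - 1)} (h : (l : ℕ) + 1 ≤ m) :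
    glue a s m p d l ≤ m * s - 1 := by
  rcases h.lt_or_eq with h | h
  · rw [glue_of_lt h]
    have := Nat.mul_le_mul_right s h.le
    have := hp.2 ⟨l, by omega⟩
    simp only at this
    omega
  · exact (glue_of_eq h).le

lemma le_glue {l : Fin (a - 1)} (h : m ≤ (l : ℕ) + 1) : m * s - 1 ≤ glue a s m p d l := by
  rcases h.lt_or_eq with h | h
  · rw [glue_of_ge (by omega)]
    exact Nat.le_add_left _ _
  · exact (glue_of_eq h.symm).ge

lemma glue_lt (hs : 0 < s) (hm : 0 < m) (hd : IsDyck (a - m) s d) {l : Fin (a - 1)} (h : m ≤ l) :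
    glue a s m p d l < (l + 1) * s - 1 := by
  rw [glue_of_ge h]
  have hdl : d ⟨l - m, by omega⟩ ≤ (l - m + 1) * s - 1 := hd.2 _
  have : ((l : ℕ) + 1) * s = (l - m + 1) * s + m * s := by rw [← add_mul]; congr 1; omega
  have := Nat.le_mul_of_pos_right (l - m + 1) hs
  have := Nat.le_mul_of_pos_right m hs
  omega

lemma isDyck_glue (hs : 0 < s) (hm : 0 < m) (hma : m < a) (hp : IsDyck m s p)
    (hd : IsDyck (a - m) s d) :
    IsDyck a s (glue a s m p d) ∧ LastTouchAt s m (glue a s m p d) := by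
  refine ⟨⟨fun l l' hll => ?_, fun l => ?_⟩,
    ⟨⟨m - 1, by omega⟩, by simp only; omega, glue_of_eq (by simp only; omega)⟩,
    fun l hl => (glue_lt hs hm hd hl).ne⟩
  · rw [Fin.le_def] at hll
    rcases lt_or_ge ((l' : ℕ) + 1) m with h' | h'
    · rw [glue_of_lt h', glue_of_lt (by omega)]
      exact hp.1 (Fin.mk_le_mk.2 hll)
    rcases lt_or_ge (l : ℕ) m with h | h
    · exact (glue_le hp (by omega)).trans (le_glue h')
    · rw [glue_of_ge h, glue_of_ge (by omega)]
      exact Nat.add_le_add_right (hd.1 (Fin.mk_le_mk.2 (by omega))) _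
  · rcases lt_or_ge ((l : ℕ) + 1) m with h | h
    · rw [glue_of_lt h]
      exact hp.2 _
    rcases lt_or_ge (l : ℕ) m with h' | h'
    · rw [glue_of_eq (by omega), show (l : ℕ) + 1 = m by omega]
    · exact (glue_lt hs hm hd h').le

lemma IsDyck.prefix (hma : m < a) {c : Fin (a - 1) → ℕ} (hc : IsDyck a s c) :
    IsDyck m s fun i : Fin (m - 1) => c ⟨i, by omega⟩ :=
  ⟨fun _ _ hij => hc.1 (Fin.mk_le_mk.2 hij), fun _ => hc.2 _⟩

lemma IsDyck.suffix (hs : 0 < s) (hma : m < a) {c : Fin (a - 1) → ℕ} (hc : IsDyck a s c)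
    (hlast : LastTouchAt s m c) :
    IsDyck (a - m) s fun i : Fin (a - m - 1) => c ⟨m + i, by omega⟩ - (m * s - 1) := by
  refine ⟨fun i j hij => Nat.sub_le_sub_right (hc.1 (Fin.mk_le_mk.2 ?_)) _, fun i => ?_⟩
  · rw [Fin.le_def] at hij
    omega
  have h₁ : c ⟨m + i, _⟩ ≤ (m + i + 1) * s - 1 := hc.2 ⟨m + i, by omega⟩
  have h₂ : c ⟨m + i, _⟩ ≠ (m + i + 1) * s - 1 := hlast.2 ⟨m + i, by omega⟩ (by simp)
  have : (m + i + 1) * s = m * s + (i + 1) * s := by ring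
  have := Nat.le_mul_of_pos_right (i + 1) hs
  have := Nat.le_mul_of_pos_right m hs
  beta_reduce
  omega

lemma glue_prefix_suffix (hma : m < a) {c : Fin (a - 1) → ℕ} (hc : IsDyck a s c)
    (hlast : LastTouchAt s m c) :
    glue a s m (fun i : Fin (m - 1) => c ⟨i, by omega⟩)
      (fun i : Fin (a - m - 1) => c ⟨m + i, by omega⟩ - (m * s - 1)) = c := by
  obtain ⟨⟨l₀, hl₀, hcl₀⟩, -⟩ := hlast
  funext l
  rcases lt_or_ge ((l : ℕ) + 1) m with h | h
  · exact glue_of_lt h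
  rcases lt_or_ge (l : ℕ) m with h' | h'
  · rw [glue_of_eq (by omega), ← hcl₀, Fin.ext (by omega : (l : ℕ) = l₀)]
  · have : c l₀ ≤ c l := hc.1 (Fin.le_def.2 (by omega))
    rw [glue_of_ge h',
      show (⟨m + (l - m), _⟩ : Fin (a - 1)) = l from Fin.ext (by simp only; omega)]
    omega

lemma card_lastTouchAt (hs : 0 < s) (hm : 0 < m) (hma : m < a) :
    Nat.card {c : Fin (a - 1) → ℕ // IsDyck a s c ∧ LastTouchAt s m c} =
      Nat.card {p : Fin (m - 1) → ℕ // IsDyck m s p} *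
        Nat.card {d : Fin (a - m - 1) → ℕ // IsDyck (a - m) s d} := by
  rw [← Nat.card_prod]
  exact Nat.card_congr
    { toFun c := (⟨_, c.2.1.prefix hma⟩, ⟨_, c.2.1.suffix hs hma c.2.2⟩)
      invFun x := ⟨glue a s m x.1.1 x.2.1, isDyck_glue hs hm hma x.1.2 x.2.2⟩
      left_inv c := Subtype.ext (glue_prefix_suffix hma c.2.1 c.2.2)
      right_inv x := Prod.ext (Subtype.ext (funext fun i => glue_of_lt (by simp only; omega)))
        (Subtype.ext (funext fun i => by simp [glue_of_ge])) }

end Glue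

lemma LastTouchAt.unique {a s m m' : ℕ} {c : Fin (a - 1) → ℕ} (h : LastTouchAt s m c)
    (h' : LastTouchAt s m' c) : m = m' := by
  have key : ∀ {m m'}, LastTouchAt s m c → LastTouchAt s m' c → ¬ m < m' := by
    rintro m m' h ⟨⟨l, hl, hcl⟩, -⟩ hlt
    exact h.2 l (by omega) (by rw [hl]; exact hcl)
  exact le_antisymm (not_lt.1 (key h' h)) (not_lt.1 (key h h'))

lemma exists_touch_iff_exists_lastTouchAt {a s k : ℕ} (c : Fin (a - 1) → ℕ) :
    (∃ l : Fin (a - 1), k ≤ l ∧ c l = (l + 1) * s - 1) ↔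
      ∃ m ∈ Icc (k + 1) (a - 1), LastTouchAt s m c := by
  constructor
  · intro h
    obtain ⟨l, hl, hmax⟩ := exists_max_image
      {l : Fin (a - 1) | k ≤ l ∧ c l = (l + 1) * s - 1} Fin.val (by simpa [Finset.Nonempty] using h)
    simp only [mem_filter, mem_univ, true_and] at hl hmax
    refine ⟨l + 1, mem_Icc.2 ⟨by omega, by omega⟩, ⟨l, rfl, hl.2⟩, fun l' hl' hcl' => ?_⟩
    have := hmax l' ⟨by omega, hcl'⟩
    omega
  · rintro ⟨m, hm, ⟨l, hlm, hcl⟩, -⟩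
    exact ⟨l, by rw [mem_Icc] at hm; omega, by rw [hlm]; exact hcl⟩

lemma card_isDyck_and_touch {a s k : ℕ} (hs : 0 < s) :
    Nat.card {c : Fin (a - 1) → ℕ //
        IsDyck a s c ∧ ∃ l : Fin (a - 1), k ≤ l ∧ c l = (l + 1) * s - 1} =
      ∑ m ∈ Icc (k + 1) (a - 1), Nat.card {p : Fin (m - 1) → ℕ // IsDyck m s p} *
        Nat.card {d : Fin (a - m - 1) → ℕ // IsDyck (a - m) s d} := by
  have hfin (m : ℕ) : Finite {c : Fin (a - 1) → ℕ // IsDyck a s c ∧ LastTouchAt s m c} :=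
    Finite.of_injective (fun c => (⟨c.1, c.2.1⟩ : {c // IsDyck a s c}))
      fun c c' h => Subtype.ext (congrArg (fun x : {c // IsDyck a s c} => x.1) h)
  rw [← sum_congr rfl fun m hm => card_lastTouchAt hs (by rw [mem_Icc] at hm; omega)
    (by rw [mem_Icc] at hm; omega), ← Nat.card_subtype_exists_mem_eq_sum _ _
    fun c m m' h h' => h.2.unique h'.2]
  refine Nat.card_congr (Equiv.subtypeEquivRight fun c => ?_)
  rw [exists_touch_iff_exists_lastTouchAt]
  constructor
  · rintro ⟨hc, m, hm, h⟩
    exact ⟨m, hm, hc, h⟩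
  · rintro ⟨m, hm, hc, h⟩
    exact ⟨hc, m, hm, h⟩

end RationalDyck

open RationalDyck in
theorem dyck_count_a_mul_succ_sub_two_general (k n : ℕ) (hk : 1 ≤ k) :
    (dyckCount (2 * k) (2 * k * (n + 1) - 2) : ℚ) =
      Cminus (2 * k) n -
        ∑ j ∈ Finset.Icc 1 (k - 1), Cminus (2 * k - j) n * Cminus j n := by
  have hsplit := Nat.card_subtype_eq_card_and_add_card_and_not (IsDyck (2 * k) (n + 1))
    fun c => ∃ l : Fin (2 * k - 1), k ≤ l ∧ c l = (l + 1) * (n + 1) - 1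
  rw [card_isDyck_and_touch n.succ_pos, ← dyckCount_two_mul_eq_card n.succ_pos] at hsplit
  rw [eq_sub_iff_add_eq, ← card_isDyck_eq_Cminus (by omega), hsplit, add_comm]
  push_cast
  congr 1
  refine sum_nbij' (fun m => 2 * k - m) (fun j => 2 * k - j) ?_ ?_ ?_ ?_ fun m hm => ?_ <;>
    simp only [mem_Icc] at * <;> try omega
  rw [card_isDyck_eq_Cminus (by omega), card_isDyck_eq_Cminus (by omega),
    Nat.sub_sub_self (by omega)]

theorem dyck_count_a_mul_succ_sub_two (k n : ℕ) (hk : 1 ≤ k) (hn : 1 ≤ n) :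
    (dyckCount (2 * k) (2 * k * (n + 1) - 2) : ℚ) =
      Cminus (2 * k) n -
        ∑ j ∈ Finset.Icc 1 (k - 1), Cminus (2 * k - j) n * Cminus j n :=
  dyck_count_a_mul_succ_sub_two_general k n hk
end

section
/- Let p be a prime and b a positive integer. If p does not divide b, then |D_{p,b}| = (1/(p+b))·binom(p+b, p); if b = kp for some positive integer k, then |D_{p,b}| = (1/(p+b+1))·binom(p+b+1, p). -/
open Finset Pointwise Fin.NatCast

namespace DyckPath

section CycleLemma

variable {n : ℕ} [NeZero n] (s : Finset (Fin n))

def southCount (i : ℕ) : ℕ := Nat.count (fun m => (m : Fin n) ∈ s) i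

lemma southCount_of_le {i : ℕ} (hi : i ≤ n) : southCount s i = #{x ∈ s | x.val < i} := by
  rw [southCount, Nat.count_eq_card_filter_range, ← card_map Fin.valEmbedding]
  congr 1
  ext m
  simp only [mem_filter, mem_range, mem_map, Fin.valEmbedding_apply]
  constructor
  · rintro ⟨hm, hms⟩
    have hmn := Fin.val_cast_of_lt (hm.trans_le hi)
    exact ⟨m, ⟨hms, by omega⟩, hmn⟩
  · rintro ⟨x, ⟨hxs, hxi⟩, rfl⟩
    exact ⟨hxi, by rwa [Fin.cast_val_eq_self]⟩

lemma southCount_self : southCount s n = #s := by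
  rw [southCount_of_le s le_rfl, filter_true_of_mem fun x _ => x.isLt]

lemma southCount_add_self (i : ℕ) : southCount s (i + n) = southCount s i + #s := by
  simp only [southCount, Nat.count_add', Nat.cast_add, Fin.natCast_self, add_zero]
  rw [← southCount, ← southCount, southCount_self]

lemma southCount_add (j : Fin n) (i : ℕ) :
    southCount s (j + i) = southCount s j + southCount (-j +ᵥ s) i := by
  simp only [southCount, Nat.count_add, Nat.cast_add, Fin.cast_val_eq_self,
    mem_neg_vadd_finset_iff, vadd_eq_add]

def height (i : ℕ) : ℤ := n * southCount s i - #s * i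

lemma height_periodic : Function.Periodic (height s) n := fun i => by
  simp only [height, southCount_add_self]
  push_cast
  ring

lemma height_mod (i : ℕ) : height s (i % n) = height s i := by
  simpa [Nat.mod_add_div'] using ((height_periodic s).nat_mul (i / n) (i % n)).symm

lemma height_neg_vadd (j : Fin n) (i : ℕ) :
    height (-j +ᵥ s) i = height s (j + i) - height s j := by
  simp only [height, southCount_add, card_vadd_finset]
  push_cast
  ring

lemma modEq_of_height_eq (hco : (#s).Coprime n) {i i' : ℕ} (h : height s i = height s i') :
    i ≡ i' [MOD n] := by
  refine Nat.ModEq.cancel_left_of_coprime (c := #s) (Nat.coprime_comm.mp hco) ?_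
  refine (Nat.modEq_iff_dvd.mpr ⟨(southCount s i' : ℤ) - southCount s i, ?_⟩)
  simp only [height] at h
  push_cast
  linarith

def IsDyck : Prop := ∀ i, 0 ≤ height s i

variable {s}

lemma isDyck_neg_vadd_iff (j : Fin n) :
    IsDyck (-j +ᵥ s) ↔ ∀ i, height s j ≤ height s i := by
  simp only [IsDyck, height_neg_vadd, sub_nonneg]
  refine ⟨fun h i => ?_, fun h i => h _⟩
  have := h (i + n - j)
  rwa [Nat.add_sub_of_le (by omega), height_periodic] at this

theorem existsUnique_isDyck_neg_vadd (hco : (#s).Coprime n) :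
    ∃! j : Fin n, IsDyck (-j +ᵥ s) := by
  obtain ⟨j, -, hj⟩ := exists_min_image univ (fun j : Fin n => height s j) univ_nonempty
  refine ⟨j, (isDyck_neg_vadd_iff j).mpr fun i => ?_, fun j' hj' => ?_⟩
  · rw [← height_mod s i]
    exact hj ⟨i % n, Nat.mod_lt _ (NeZero.pos n)⟩ (mem_univ _)
  · have hmin := (isDyck_neg_vadd_iff j').mp hj'
    have heq := le_antisymm (hmin j) (hj j' (mem_univ _))
    exact Fin.ext <| Nat.ModEq.eq_of_lt_of_lt (modEq_of_height_eq s hco heq) j'.isLt j.isLt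

theorem choose_eq_card_isDyck_mul {a : ℕ} (hco : a.Coprime n) :
    n.choose a = Nat.card {s : Set.powersetCard (Fin n) a // IsDyck (s : Finset (Fin n))} * n := by
  let rotate : {t : Set.powersetCard (Fin n) a // IsDyck (t : Finset (Fin n))} × Fin n →
      Set.powersetCard (Fin n) a := fun t => t.2 +ᵥ t.1.1
  have hrotate : Function.Bijective rotate := by
    refine ⟨?_, fun s => ?_⟩
    · rintro ⟨t, j⟩ ⟨t', j'⟩ (h : j +ᵥ t.1 = j' +ᵥ t'.1)
      set s := j +ᵥ t.1
      have hs : #(s : Finset (Fin n)) = a := Set.powersetCard.card_eq s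
      obtain ⟨j₀, -, huniq⟩ := existsUnique_isDyck_neg_vadd (hs ▸ hco)
      have hj : IsDyck (-j +ᵥ (s : Finset (Fin n))) := by simpa [s] using t.2
      have hj' : IsDyck (-j' +ᵥ (s : Finset (Fin n))) := by simpa [h] using t'.2
      obtain rfl : j = j' := (huniq j hj).trans (huniq j' hj').symm
      exact Prod.ext (Subtype.ext (vadd_left_cancel_iff j |>.mp h)) rfl
    · have hs : #(s : Finset (Fin n)) = a := Set.powersetCard.card_eq s
      obtain ⟨j, hj, -⟩ := existsUnique_isDyck_neg_vadd (hs ▸ hco)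
      exact ⟨(⟨-j +ᵥ s, by simpa using hj⟩, j), vadd_neg_vadd j s⟩
  calc n.choose a = Nat.card (Set.powersetCard (Fin n) a) := by
        rw [Set.powersetCard.card, Nat.card_fin]
    _ = _ := by rw [← Nat.card_eq_of_bijective rotate hrotate, Nat.card_prod, Nat.card_fin]

end CycleLemma

section Enumeration

variable {n a : ℕ} [NeZero n] {s : Finset (Fin n)}

lemma southCount_orderEmbOfFin (h : #s = a) (k : Fin a) :
    southCount s (s.orderEmbOfFin h k) = k := by
  set e := s.orderEmbOfFin h
  have hbelow : {x ∈ s | x.val < (e k).val} = (Iio k).map e.toEmbedding := by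
    ext x
    simp only [mem_filter, mem_map, mem_Iio, RelEmbedding.coe_toEmbedding, ← Fin.lt_def]
    constructor
    · rintro ⟨hx, hxk⟩
      obtain ⟨j, rfl⟩ : x ∈ Set.range e := by rwa [range_orderEmbOfFin]
      exact ⟨j, e.lt_iff_lt.mp hxk, rfl⟩
    · rintro ⟨j, hjk, rfl⟩
      exact ⟨orderEmbOfFin_mem s h j, e.lt_iff_lt.mpr hjk⟩
  rw [southCount_of_le s (e k).isLt.le, hbelow, card_map, Fin.card_Iio]

theorem isDyck_iff_orderEmbOfFin (h : #s = a) :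
    IsDyck s ↔ ∀ k : Fin a, a * s.orderEmbOfFin h k ≤ n * k := by
  set e := s.orderEmbOfFin h
  refine ⟨fun hs k => ?_, fun hs i => ?_⟩
  · have := hs (e k)
    rw [height, southCount_orderEmbOfFin, h, sub_nonneg] at this
    exact_mod_cast this
  · rw [← height_mod, height, h, sub_nonneg]
    have hi : i % n < n := Nat.mod_lt i (NeZero.pos n)
    have hcount : southCount s (i % n) ≤ a := h ▸ southCount_self s ▸
      Nat.count_monotone _ hi.le
    obtain hcount | hcount := hcount.eq_or_lt
    · rw [hcount]
      exact_mod_cast (by nlinarith : a * (i % n) ≤ n * a)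
    · set k : Fin a := ⟨_, hcount⟩
      -- the first south step at or after position `i % n` is the `k`-th one
      have hik : i % n ≤ e k := by
        by_contra! hlt
        have hk : ((e k : ℕ) : Fin n) ∈ s := by
          rw [Fin.cast_val_eq_self]; exact orderEmbOfFin_mem s h k
        have := Nat.count_strict_mono (p := fun m : ℕ => (m : Fin n) ∈ s) hk hlt
        rw [← southCount, ← southCount, southCount_orderEmbOfFin] at this
        exact this.false
      exact_mod_cast (Nat.mul_le_mul_left a hik).trans (hs k)

end Enumeration

section Positions

lemma le_div_iff_mul_add_le {a b c j : ℕ} (ha : 0 < a) :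
    c ≤ b * j / a ↔ a * (c + j) ≤ (a + b) * j := by
  rw [Nat.le_div_iff_mul_le ha, mul_add, add_mul, mul_comm c]
  omega

lemma apply_add_sub_le_apply {k N : ℕ} (f : Fin k ↪o Fin N) {i j : Fin k} (hij : i ≤ j) :
    (f i : ℕ) + (j - i : ℕ) ≤ f j := by
  obtain ⟨d, hd⟩ := Nat.exists_eq_add_of_le (Fin.le_def.mp hij)
  induction d generalizing j with
  | zero => simp [Fin.ext hd]
  | succ d ih =>
    have hj' := ih (j := ⟨i + d, by omega⟩) (Fin.le_def.mpr (by simp)) rfl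
    have := f.strictMono
      (show (⟨i + d, by omega⟩ : Fin k) < j from Fin.lt_def.mpr (by simp; omega))
    simp only [Fin.lt_def] at hj' this
    omega

variable {m b : ℕ}

/-- The south steps of the path with Dyck sequence `c` sit at positions `0` and
`c l + (l + 1)`: the first step is south, and `c l` east steps precede the `(l + 2)`-th one. -/
def southPos (c : Fin m → ℕ) : Fin (m + 1) → ℕ := Fin.cons 0 fun l => c l + (l + 1)

lemma strictMono_southPos {c : Fin m → ℕ} (hc : Monotone c) : StrictMono (southPos c) := by
  intro i j hij
  induction i using Fin.cases <;> induction j using Fin.cases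
  · exact absurd hij (lt_irrefl 0)
  · simp [southPos]
  · exact absurd hij (Fin.succ_pos _).not_gt
  · rename_i l l'
    have := hc (Fin.succ_lt_succ_iff.mp hij).le
    simp only [southPos, Fin.cons_succ]
    have : (l : ℕ) < l' := Fin.succ_lt_succ_iff.mp hij
    omega

lemma mul_southPos_le {c : Fin m → ℕ} (hc : ∀ l : Fin m, c l ≤ b * (l.1 + 1) / (m + 1))
    (k : Fin (m + 1)) : (m + 1) * southPos c k ≤ (m + b + 1) * k := by
  induction k using Fin.cases with
  | zero => simp [southPos]
  | succ l =>
    have := (le_div_iff_mul_add_le m.add_one_pos).mp (hc l)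
    simp only [southPos, Fin.cons_succ, Fin.val_succ]
    linarith

lemma southPos_lt {c : Fin m → ℕ} (hc : ∀ l : Fin m, c l ≤ b * (l.1 + 1) / (m + 1))
    (k : Fin (m + 1)) : southPos c k < m + b + 1 := by
  have := mul_southPos_le hc k
  have := k.isLt
  nlinarith

def dyckSeqEquiv (m b : ℕ) :
    {c : Fin m → ℕ // Monotone c ∧ ∀ l : Fin m, c l ≤ b * (l.1 + 1) / (m + 1)} ≃
      {f : Fin (m + 1) ↪o Fin (m + b + 1) //
        ∀ k, (m + 1) * (f k : ℕ) ≤ (m + b + 1) * k} where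
  toFun c := ⟨OrderEmbedding.ofStrictMono (fun k => ⟨southPos c.1 k, southPos_lt c.2.2 k⟩)
      fun _ _ h => strictMono_southPos c.2.1 h, mul_southPos_le c.2.2⟩
  invFun f :=
    ⟨fun l => f.1 l.succ - (l + 1), fun l l' h => by
      have := apply_add_sub_le_apply f.1 (Fin.succ_le_succ_iff.mpr h)
      simp only [Fin.val_succ] at this ⊢
      omega, fun l => by
      have hbound := f.2 l.succ
      have hle := apply_add_sub_le_apply f.1 (Fin.zero_le l.succ)
      simp only [Fin.val_succ, Fin.val_zero] at hbound hle ⊢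
      rw [le_div_iff_mul_add_le (by omega), Nat.sub_add_cancel (by omega)]
      linarith⟩
  left_inv c := by
    ext l
    simp [southPos]
  right_inv f := by
    ext k
    induction k using Fin.cases with
    | zero => simpa [southPos, eq_comm] using f.2 0
    | succ l =>
      have := apply_add_sub_le_apply f.1 (Fin.zero_le l.succ)
      simp only [Fin.val_succ, Fin.val_zero] at this
      simp [southPos]
      omega

end Positions

theorem dyckCount_eq_card_isDyck (m b : ℕ) :
    dyckCount (m + 1) b =
      Nat.card {s : Set.powersetCard (Fin (m + b + 1)) (m + 1) //
        IsDyck (s : Finset (Fin (m + b + 1)))} :=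
  Nat.card_congr <| (dyckSeqEquiv m b).trans <|
    (Set.powersetCard.ofFinEmbEquiv.symm.subtypeEquiv
      fun s : Set.powersetCard (Fin (m + b + 1)) (m + 1) =>
      isDyck_iff_orderEmbOfFin (Set.powersetCard.card_eq s)).symm

theorem add_mul_dyckCount {a b : ℕ} (ha : 0 < a) (hco : a.Coprime b) :
    (a + b) * dyckCount a b = (a + b).choose a := by
  obtain ⟨m, rfl⟩ := Nat.exists_eq_add_one_of_ne_zero ha.ne'
  have hco' : (m + 1).Coprime (m + b + 1) := by
    rw [show m + b + 1 = b + (m + 1) by ring]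
    exact Nat.coprime_add_self_right.mpr hco
  rw [dyckCount_eq_card_isDyck, show m + 1 + b = m + b + 1 by ring,
    choose_eq_card_isDyck_mul hco', mul_comm]

theorem dyckCount_mul_add_one (a k : ℕ) : dyckCount a (k * a + 1) = dyckCount a (k * a) := by
  have hfloor (l : Fin (a - 1)) : (k * a + 1) * (l.1 + 1) / a = k * a * (l.1 + 1) / a := by
    have hl : l.1 + 1 < a := by omega
    have ha : 0 < a := by omega
    rw [show (k * a + 1) * (l.1 + 1) = (l.1 + 1) + a * (k * (l.1 + 1)) by ring,
      show k * a * (l.1 + 1) = a * (k * (l.1 + 1)) by ring, Nat.add_mul_div_left _ _ ha,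
      Nat.mul_div_cancel_left _ ha, Nat.div_eq_of_lt hl, zero_add]
  simp only [dyckCount, hfloor]

end DyckPath

theorem dyck_count_prime_general (p b : ℕ) (hp : Nat.Prime p) :
    (¬ p ∣ b → (dyckCount p b : ℚ) = ((p + b).choose p : ℚ) / ((p + b : ℕ) : ℚ)) ∧
    (∀ k : ℕ, 1 ≤ k → b = k * p →
      (dyckCount p b : ℚ) = ((p + b + 1).choose p : ℚ) / ((p + b + 1 : ℕ) : ℚ)) := by
  have hp0 := hp.pos
  refine ⟨fun hpb => ?_, fun k _ hb => ?_⟩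
  · rw [eq_div_iff (Nat.cast_ne_zero.mpr (by omega)), mul_comm]
    exact_mod_cast DyckPath.add_mul_dyckCount hp0 (hp.coprime_iff_not_dvd.mpr hpb)
  · have hco : p.Coprime (b + 1) := by
      rw [hb, mul_comm, Nat.coprime_mul_left_add_right]
      exact Nat.coprime_one_right p
    rw [eq_div_iff (Nat.cast_ne_zero.mpr (by omega)), mul_comm, hb,
      ← DyckPath.dyckCount_mul_add_one, ← hb]
    exact_mod_cast DyckPath.add_mul_dyckCount hp0 hco

theorem dyck_count_prime (p b : ℕ) (hp : Nat.Prime p) (hb : 0 < b) :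
    (¬ p ∣ b → (dyckCount p b : ℚ) = ((p + b).choose p : ℚ) / ((p + b : ℕ) : ℚ)) ∧
    (∀ k : ℕ, 1 ≤ k → b = k * p →
      (dyckCount p b : ℚ) = ((p + b + 1).choose p : ℚ) / ((p + b + 1 : ℕ) : ℚ)) :=
  dyck_count_prime_general p b hp
end

section
/- Let k ≥ 1 and n ≥ 1 be integers and set a = 2k. Then |D_{a, an+2}| − |D_{a, an+1}| = Σ_{j=1}^{k} |D_{a−j, (a−j)n+1}| · |D_{j, jn+1}|, where |D_{1,m}| = 1 by convention. -/
/-!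
For `a = 2k` the bound `⌊(an+2)l/a⌋` equals `nl + ⌊l/k⌋`, so it exceeds the bound `nl` of
the `(a, an+1)` case by one exactly when `l ≥ k`. A sequence counted by the difference
therefore has a first index `l ≥ k` with `c_l = nl + 1`. Cutting there, `c_1, …, c_{l-1}` is an
arbitrary `(l, ln+1)`-sequence and `c_{l+i} - c_l` (`1 ≤ i < a - l`) is an arbitrary
`(a-l, (a-l)n+1)`-sequence; put `j = a - l`.
-/

namespace Dyck

open scoped Function

-- Indices start at `0`: `c i` is the paper's `c_{i+1}`.
def boundedMonotone (m : ℕ) (f : ℕ → ℕ) : Set (Fin m → ℕ) :=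
  {c | Monotone c ∧ ∀ i : Fin m, c i ≤ f i}

variable {m : ℕ} {f g : ℕ → ℕ}

theorem boundedMonotone_finite (m : ℕ) (f : ℕ → ℕ) : (boundedMonotone m f).Finite :=
  (Set.finite_Iic fun i : Fin m => f i).subset fun _ hc => hc.2

theorem boundedMonotone_congr (h : ∀ i < m, f i = g i) :
    boundedMonotone m f = boundedMonotone m g := by
  ext c
  simp only [boundedMonotone, Set.mem_ofPred_eq, fun i : Fin m => h i i.2]

theorem boundedMonotone_subset (h : ∀ i < m, g i ≤ f i) :
    boundedMonotone m g ⊆ boundedMonotone m f :=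
  fun _ hc => ⟨hc.1, fun i => (hc.2 i).trans (h i i.2)⟩

theorem dyckCount_eq_ncard (a b : ℕ) :
    dyckCount a b = (boundedMonotone (a - 1) fun i => b * (i + 1) / a).ncard := by
  rw [← Nat.card_coe_set_eq]
  rfl

theorem mul_add_mul_div (a n r i : ℕ) (ha : 0 < a) :
    (a * n + r) * i / a = n * i + r * i / a := by
  rw [add_mul, mul_assoc, add_comm, Nat.add_mul_div_left _ _ ha, add_comm]

theorem dyckCount_mul_add_one (p n : ℕ) :
    dyckCount p (p * n + 1) = (boundedMonotone (p - 1) fun i => n * (i + 1)).ncard := by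
  rw [dyckCount_eq_ncard]
  congr 1
  refine boundedMonotone_congr fun i hi => ?_
  rw [mul_add_mul_div p n 1 _ (by omega), one_mul, Nat.div_eq_of_lt (by omega), add_zero]

theorem dyckCount_two_mul_mul_add_two (k n : ℕ) :
    dyckCount (2 * k) (2 * k * n + 2) =
      (boundedMonotone (2 * k - 1) fun i => n * (i + 1) + (i + 1) / k).ncard := by
  rw [dyckCount_eq_ncard]
  congr 1
  refine boundedMonotone_congr fun i hi => ?_
  rw [mul_add_mul_div _ n 2 _ (by omega), Nat.mul_div_mul_left _ _ two_pos]

def firstExceed (m : ℕ) (f g : ℕ → ℕ) (L : ℕ) : Set (Fin m → ℕ) :=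
  {c | c ∈ boundedMonotone m f ∧ (∀ i : Fin m, i.1 < L → c i ≤ g i) ∧
    ∃ hL : L < m, g L < c ⟨L, hL⟩}

theorem pairwise_disjoint_firstExceed : Pairwise (Disjoint on firstExceed m f g) := by
  refine (pairwise_disjoint_on _).2 fun L L' hLL' => Set.disjoint_left.2 ?_
  rintro c ⟨-, -, hL, hlt⟩ ⟨-, hle, -⟩
  exact (hle ⟨L, hL⟩ hLL').not_gt hlt

theorem boundedMonotone_diff_eq_biUnion_firstExceed :
    boundedMonotone m f \ boundedMonotone m g = ⋃ L ∈ Finset.range m, firstExceed m f g L := by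
  ext c
  simp only [Set.mem_sdiff, Set.mem_iUnion, Finset.mem_range, exists_prop]
  constructor
  · rintro ⟨hcf, hcg⟩
    have hex : ∃ L, ∃ hL : L < m, g L < c ⟨L, hL⟩ := by
      by_contra! hle
      exact hcg ⟨hcf.1, fun i => hle i i.2⟩
    refine ⟨Nat.find hex, (Nat.find_spec hex).1, hcf, fun i hi => ?_, Nat.find_spec hex⟩
    simpa using Nat.find_min hex hi
  · rintro ⟨L, -, hcf, -, hL, hlt⟩
    exact ⟨hcf, fun hcg => hlt.not_ge (hcg.2 _)⟩

theorem ncard_boundedMonotone_eq_add_sum (h : ∀ i < m, g i ≤ f i) :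
    (boundedMonotone m f).ncard =
      (boundedMonotone m g).ncard + ∑ L ∈ Finset.range m, (firstExceed m f g L).ncard := by
  rw [← Set.ncard_sdiff_add_ncard_of_subset (boundedMonotone_subset h)
    (boundedMonotone_finite m f), boundedMonotone_diff_eq_biUnion_firstExceed,
    ← Finset.set_biUnion_coe, Set.Finite.ncard_biUnion (Finset.finite_toSet _)
      (fun L _ => (boundedMonotone_finite m f).subset fun _ hc => hc.1)
      (pairwise_disjoint_firstExceed.set_pairwise _), finsum_mem_coe_finset, add_comm]

theorem firstExceed_eq_empty {L : ℕ} (h : f L ≤ g L) : firstExceed m f g L = ∅ :=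
  Set.eq_empty_of_forall_notMem fun _ ⟨hcf, _, hL, hlt⟩ =>
    (hlt.trans_le (hcf.2 ⟨L, hL⟩)).not_ge h

def splice (L v : ℕ) (h : Fin L → ℕ) (d : Fin (m - 1 - L) → ℕ) (i : Fin m) : ℕ :=
  if hi : i.1 < L then h ⟨i, hi⟩
  else if hi' : L < i.1 then v + d ⟨i - (L + 1), by omega⟩ else v

section splice

variable {L v : ℕ} {h : Fin L → ℕ} {d : Fin (m - 1 - L) → ℕ}

theorem splice_of_lt {i : Fin m} (hi : i.1 < L) : splice L v h d i = h ⟨i, hi⟩ :=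
  dif_pos hi

theorem splice_of_eq {i : Fin m} (hi : i.1 = L) : splice L v h d i = v := by
  simp [splice, hi]

theorem splice_of_gt {i : Fin m} (hi : L < i.1) :
    splice L v h d i = v + d ⟨i - (L + 1), by omega⟩ := by
  simp [splice, hi, hi.not_gt]

theorem monotone_splice (hh : Monotone h) (hd : Monotone d) (hv : ∀ i, h i ≤ v) :
    Monotone (splice L v h d) := by
  intro i j hij
  have hij' : i.1 ≤ j.1 := hij
  by_cases hj : j.1 < L
  · rw [splice_of_lt (hij'.trans_lt hj), splice_of_lt hj]
    exact hh (Fin.mk_le_mk.2 hij')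
  have hvj : v ≤ splice L v h d j := by
    rcases (not_lt.1 hj).lt_or_eq with hj | hj
    · rw [splice_of_gt hj]; exact Nat.le_add_right _ _
    · rw [splice_of_eq hj.symm]
  rcases lt_trichotomy i.1 L with hi | hi | hi
  · rw [splice_of_lt hi]; exact (hv _).trans hvj
  · rw [splice_of_eq hi]; exact hvj
  · rw [splice_of_gt hi, splice_of_gt (hi.trans_le hij')]
    exact Nat.add_le_add_left (hd (Fin.mk_le_mk.2 (by omega))) v

end splice

section firstExceed

variable {g₂ : ℕ → ℕ} {L : ℕ}

theorem splice_mem_firstExceed (hL : L < m) (hfL : f L = g L + 1)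
    (hg : ∀ i < L, g i ≤ g L) (hgf : ∀ i < L, g i ≤ f i)
    (htail : ∀ i < m - 1 - L, f (L + 1 + i) = f L + g₂ i) {h : Fin L → ℕ}
    {d : Fin (m - 1 - L) → ℕ} (hh : h ∈ boundedMonotone L g)
    (hd : d ∈ boundedMonotone (m - 1 - L) g₂) :
    splice L (f L) h d ∈ firstExceed m f g L := by
  have hv : ∀ i, h i ≤ f L :=
    fun i => (hh.2 i).trans ((hg i i.2).trans (hfL ▸ Nat.le_succ _))
  refine ⟨⟨monotone_splice hh.1 hd.1 hv, fun i => ?_⟩, fun i hi => ?_, hL, ?_⟩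
  · rcases lt_trichotomy i.1 L with hi | hi | hi
    · rw [splice_of_lt hi]; exact (hh.2 _).trans (hgf i hi)
    · rw [splice_of_eq hi, hi]
    · rw [splice_of_gt hi]
      have := htail (i - (L + 1)) (by omega)
      rw [show L + 1 + (i - (L + 1)) = i by omega] at this
      exact this ▸ Nat.add_le_add_left (hd.2 _) _
  · rw [splice_of_lt hi]; exact hh.2 _
  · rw [splice_of_eq (i := ⟨L, hL⟩) rfl, hfL]; exact Nat.lt_succ_self _

theorem splice_inj {v : ℕ} (hL : L ≤ m) {h h' : Fin L → ℕ} {d d' : Fin (m - 1 - L) → ℕ}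
    (heq : splice L v h d = splice L v h' d') : h = h' ∧ d = d' := by
  refine ⟨funext fun i => ?_, funext fun i => ?_⟩
  · have := congrFun heq ⟨i, by omega⟩
    simpa [splice] using this
  · have := congrFun heq ⟨L + 1 + i, by omega⟩
    simpa [splice, show ¬L + 1 + i.1 < L by omega, show L < L + 1 + i.1 by omega]
      using this

theorem eq_splice_of_mem_firstExceed (hL : L < m) (hfL : f L = g L + 1) {c : Fin m → ℕ}
    (hc : c ∈ firstExceed m f g L) :
    c = splice L (f L) (fun i => c ⟨i, by omega⟩)
      (fun i => c ⟨L + 1 + i, by omega⟩ - f L) := by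
  obtain ⟨⟨hmono, hcf⟩, -, _, hgc⟩ := hc
  funext i
  have hcL : c ⟨L, hL⟩ = f L := le_antisymm (hcf _) (hfL ▸ hgc)
  rcases lt_trichotomy i.1 L with hi | hi | hi
  · rw [splice_of_lt hi]
  · rw [splice_of_eq hi, ← hcL]
    exact congrArg c (Fin.ext hi)
  · rw [splice_of_gt hi]
    have : f L ≤ c i := hcL ▸ hmono (Fin.mk_le_mk.2 hi.le)
    simp only [show L + 1 + (i.1 - (L + 1)) = i by omega, Fin.eta]
    omega

theorem ncard_firstExceed (hL : L < m) (hfL : f L = g L + 1)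
    (hg : ∀ i < L, g i ≤ g L) (hgf : ∀ i < L, g i ≤ f i)
    (htail : ∀ i < m - 1 - L, f (L + 1 + i) = f L + g₂ i) :
    (firstExceed m f g L).ncard =
      (boundedMonotone L g).ncard * (boundedMonotone (m - 1 - L) g₂).ncard := by
  rw [← Set.ncard_prod]
  symm
  refine Set.ncard_congr (fun p _ => splice L (f L) p.1 p.2)
    (fun p hp => splice_mem_firstExceed hL hfL hg hgf htail hp.1 hp.2)
    (fun p p' _ _ heq => Prod.ext_iff.2 (splice_inj hL.le heq)) fun c hc => ?_
  have hcsplice := eq_splice_of_mem_firstExceed hL hfL hc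
  obtain ⟨⟨hmono, hcf⟩, hcg, -⟩ := hc
  refine ⟨(fun i => c ⟨i, by omega⟩, fun i => c ⟨L + 1 + i, by omega⟩ - f L),
    ⟨⟨fun i j hij => hmono hij, fun i => hcg _ i.2⟩, fun i j hij => ?_, fun i => ?_⟩,
    hcsplice.symm⟩
  · exact Nat.sub_le_sub_right (hmono (Fin.mk_le_mk.2 (by simpa using hij))) _
  · have := hcf ⟨L + 1 + i, by omega⟩
    rw [htail i i.2] at this
    show c _ - f L ≤ g₂ i
    omega

end firstExceed

theorem firstExceed_two_mul_sub_one_eq_empty {k n L : ℕ} (hL : L + 1 < k) :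
    firstExceed (2 * k - 1) (fun i => n * (i + 1) + (i + 1) / k) (fun i => n * (i + 1)) L = ∅ :=
  firstExceed_eq_empty (by rw [Nat.div_eq_of_lt hL, add_zero])

theorem ncard_firstExceed_two_mul_sub_one {k n j : ℕ} (hj : 1 ≤ j) (hjk : j ≤ k) :
    (firstExceed (2 * k - 1) (fun i => n * (i + 1) + (i + 1) / k) (fun i => n * (i + 1))
        (2 * k - 1 - j)).ncard =
      dyckCount (2 * k - j) ((2 * k - j) * n + 1) * dyckCount j (j * n + 1) := by
  have hdiv : ∀ i, k ≤ i → i < 2 * k → i / k = 1 := fun i hki hi =>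
    Nat.div_eq_of_lt_le (by omega) (by omega)
  rw [ncard_firstExceed (g₂ := fun i => n * (i + 1)) (by omega), dyckCount_mul_add_one,
    dyckCount_mul_add_one, show 2 * k - j - 1 = 2 * k - 1 - j by omega,
    show 2 * k - 1 - 1 - (2 * k - 1 - j) = j - 1 by omega]
  · rw [hdiv _ (by omega) (by omega)]
  · exact fun i hi => Nat.mul_le_mul_left n (by omega)
  · exact fun i _ => Nat.le_add_right _ _
  · intro i hi
    rw [hdiv _ (by omega) (by omega), hdiv _ (by omega) (by omega)]
    ring

theorem sum_ncard_firstExceed_two_mul_sub_one (k n : ℕ) :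
    ∑ L ∈ Finset.range (2 * k - 1),
        (firstExceed (2 * k - 1) (fun i => n * (i + 1) + (i + 1) / k) (fun i => n * (i + 1))
          L).ncard =
      ∑ j ∈ Finset.Icc 1 k,
        dyckCount (2 * k - j) ((2 * k - j) * n + 1) * dyckCount j (j * n + 1) := by
  symm
  refine Finset.sum_of_injOn (2 * k - 1 - ·) ?_ ?_ ?_ ?_
  · intro j hj j' hj' h
    simp only [Finset.coe_Icc, Set.mem_Icc] at hj hj' h
    omega
  · intro j hj
    simp only [Finset.coe_Icc, Set.mem_Icc, Finset.coe_range, Set.mem_Iio] at hj ⊢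
    omega
  · intro L hL hLj
    rw [firstExceed_two_mul_sub_one_eq_empty, Set.ncard_empty]
    by_contra! hkL
    rw [Finset.mem_range] at hL
    refine hLj ⟨2 * k - 1 - L, ?_, by dsimp only; omega⟩
    simp only [Finset.coe_Icc, Set.mem_Icc]
    omega
  · intro j hj
    rw [Finset.mem_Icc] at hj
    exact (ncard_firstExceed_two_mul_sub_one hj.1 hj.2).symm

end Dyck

open Dyck in
theorem dyck_count_diff_add_general (k n : ℕ) :
    (dyckCount (2 * k) (2 * k * n + 2) : ℤ) -
      (dyckCount (2 * k) (2 * k * n + 1) : ℤ) =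
      ∑ j ∈ Finset.Icc 1 k,
        (dyckCount (2 * k - j) ((2 * k - j) * n + 1) : ℤ) *
          (dyckCount j (j * n + 1) : ℤ) := by
  have hsplit := ncard_boundedMonotone_eq_add_sum (m := 2 * k - 1)
    (f := fun i => n * (i + 1) + (i + 1) / k) (g := fun i => n * (i + 1))
    fun i _ => Nat.le_add_right _ _
  rw [← dyckCount_two_mul_mul_add_two, ← dyckCount_mul_add_one] at hsplit
  rw [hsplit, Nat.cast_add, add_sub_cancel_left, sum_ncard_firstExceed_two_mul_sub_one]
  push_cast
  rfl

theorem dyck_count_diff_add (k n : ℕ) (hk : 1 ≤ k) (hn : 1 ≤ n) :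
    (dyckCount (2 * k) (2 * k * n + 2) : ℤ) -
      (dyckCount (2 * k) (2 * k * n + 1) : ℤ) =
      ∑ j ∈ Finset.Icc 1 k,
        (dyckCount (2 * k - j) ((2 * k - j) * n + 1) : ℤ) *
          (dyckCount j (j * n + 1) : ℤ) :=
  dyck_count_diff_add_general k n
end

section
/- For every integer n ≥ 1, the number of Dyck paths in the 8 × (8n+6) rectangle satisfies |D_{8,8n+6}| = C(8, 8n+7) − C(7, 7n+6) − C(6, 6n+5)·C(2, 2n+1) − C(5, 5n+4)·C(3, 3n+2), where C(s,t) := (1/(s+t))·binom(s+t, s). -/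
/-- `C(s,t) = (1/(s+t)) * binom(s+t, s)`. -/
noncomputable def rectCatalan (s t : ℕ) : ℚ :=
  ((s + t).choose s : ℚ) / ((s + t : ℕ) : ℚ)

open Finset

noncomputable def cnt (L : List ℕ) (m : ℕ) : ℕ :=
  Nat.card {c : Fin L.length → ℕ //
    Monotone c ∧ (∀ l, c l ≤ L.get l) ∧ (∀ l, m ≤ c l)}

lemma finite_cnt (L : List ℕ) (m : ℕ) :
    Finite {c : Fin L.length → ℕ //
      Monotone c ∧ (∀ l, c l ≤ L.get l) ∧ (∀ l, m ≤ c l)} := by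
  apply Finite.of_injective
    (fun c => (fun l => (⟨c.1 l, Nat.lt_succ_of_le (c.2.2.1 l)⟩ : Fin (L.get l + 1)) :
      ∀ l, Fin (L.get l + 1)))
  intro c d h
  apply Subtype.ext
  funext l
  exact congrArg Fin.val (congrFun h l)

lemma my_card_sigma {ι : Type} [Fintype ι] (f : ι → Type) [∀ i, Finite (f i)] :
    Nat.card (Σ i, f i) = ∑ i, Nat.card (f i) := by
  letI : ∀ i, Fintype (f i) := fun i => Fintype.ofFinite _
  simp only [Nat.card_eq_fintype_card, Fintype.card_sigma]

lemma cnt_nil (m : ℕ) : cnt [] m = 1 := by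
  unfold cnt
  haveI : Unique {c : Fin ([] : List ℕ).length → ℕ //
      Monotone c ∧ (∀ l, c l ≤ ([] : List ℕ).get l) ∧ (∀ l, m ≤ c l)} := by
    refine ⟨⟨⟨fun l => l.elim0, ?_, fun l => l.elim0, fun l => l.elim0⟩⟩, ?_⟩
    · intro a b _; exact a.elim0
    · intro c; apply Subtype.ext; funext l; exact l.elim0
  exact Nat.card_unique

lemma cnt_cons (a : ℕ) (L : List ℕ) (m : ℕ) :
    cnt (a :: L) m = ∑ j ∈ Icc m a, cnt L j := by
  have e : {c : Fin (L.length + 1) → ℕ //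
      Monotone c ∧ (∀ l, c l ≤ (a :: L).get l) ∧ (∀ l, m ≤ c l)} ≃
      (Σ j : (Icc m a : Finset ℕ), {c : Fin L.length → ℕ //
        Monotone c ∧ (∀ l, c l ≤ L.get l) ∧ (∀ l, (j : ℕ) ≤ c l)}) := by
    refine ⟨fun c => ⟨⟨c.1 0, ?_⟩, ⟨fun l => c.1 l.succ, ?_, ?_, ?_⟩⟩,
      fun p => ⟨Fin.cases p.1.1 p.2.1, ?_, ?_, ?_⟩, ?_, ?_⟩
    · rw [mem_Icc]
      exact ⟨c.2.2.2 0, c.2.2.1 0⟩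
    · intro i j h
      exact c.2.1 (Fin.succ_le_succ_iff.mpr h)
    · intro l
      exact c.2.2.1 l.succ
    · intro l
      exact c.2.1 (Fin.zero_le l.succ)
    · intro i j h
      induction i using Fin.cases with
      | zero =>
        induction j using Fin.cases with
        | zero => exact le_refl _
        | succ j => simpa using p.2.2.2.2 j
      | succ i =>
        induction j using Fin.cases with
        | zero => exact absurd h (by simp [Fin.le_def])
        | succ j =>
          simp only [Fin.cases_succ]
          exact p.2.2.1 (by rwa [Fin.succ_le_succ_iff] at h)
    · intro l
      induction l using Fin.cases with
      | zero => simpa using (mem_Icc.mp p.1.2).2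
      | succ l => simpa using p.2.2.2.1 l
    · intro l
      induction l using Fin.cases with
      | zero => simpa using (mem_Icc.mp p.1.2).1
      | succ l => simpa using le_trans (mem_Icc.mp p.1.2).1 (p.2.2.2.2 l)
    · intro c
      apply Subtype.ext
      funext l
      induction l using Fin.cases with
      | zero => simp
      | succ l => simp
    · intro p
      refine Sigma.ext ?_ ?_
      · apply Subtype.ext; simp
      · apply heq_of_eq
        apply Subtype.ext
        funext l
        simp
  have h1 : cnt (a :: L) m = Nat.card {c : Fin (L.length + 1) → ℕ //
      Monotone c ∧ (∀ l, c l ≤ (a :: L).get l) ∧ (∀ l, m ≤ c l)} := rfl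
  rw [h1, Nat.card_congr e]
  haveI : ∀ j : (Icc m a : Finset ℕ), Finite {c : Fin L.length → ℕ //
      Monotone c ∧ (∀ l, c l ≤ L.get l) ∧ (∀ l, (j : ℕ) ≤ c l)} :=
    fun j => finite_cnt L j
  rw [my_card_sigma]
  rw [← Finset.sum_coe_sort (Icc m a) (fun j => cnt L j)]
  rfl

lemma sum_range_antidiff (p Q : ℕ → ℚ) (h : ∀ j, Q (j + 1) = Q j + p j) (N : ℕ) :
    ∑ j ∈ Finset.range N, p j = Q N - Q 0 := by
  induction N with
  | zero => simp
  | succ N ih => rw [Finset.sum_range_succ, ih, h]; ring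

lemma sum_Icc_eval (p Q : ℕ → ℚ) (h : ∀ j, Q (j + 1) = Q j + p j) (m U : ℕ)
    (hm : m ≤ U + 1) :
    ∑ j ∈ Finset.Icc m U, p j = Q (U + 1) - Q m := by
  rw [← Finset.Ico_add_one_right_eq_Icc, Finset.sum_Ico_eq_sub _ hm, sum_range_antidiff p Q h,
    sum_range_antidiff p Q h]
  ring

lemma dyck_eq (n : ℕ) :
    dyckCount 8 (8 * n + 6) = cnt [n, 2*n+1, 3*n+2, 4*n+3, 5*n+3, 6*n+4, 7*n+5] 0 := by
  have key : ∀ c : Fin 7 → ℕ,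
      (Monotone c ∧ ∀ l : Fin 7, c l ≤ (8 * n + 6) * (l.1 + 1) / 8) ↔
      (Monotone c ∧ (∀ l : Fin 7, c l ≤ [n, 2*n+1, 3*n+2, 4*n+3, 5*n+3, 6*n+4, 7*n+5].get l) ∧
        (∀ l : Fin 7, 0 ≤ c l)) := by
    intro c
    constructor
    · rintro ⟨hmo, hb⟩
      refine ⟨hmo, fun l => ?_, fun l => Nat.zero_le _⟩
      have hbl := hb l
      clear hb hmo
      fin_cases l <;> norm_num at hbl ⊢ <;> omega
    · rintro ⟨hmo, hb, -⟩
      refine ⟨hmo, fun l => ?_⟩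
      have hbl := hb l
      clear hb hmo
      fin_cases l <;> norm_num at hbl ⊢ <;> omega
  have h1 : dyckCount 8 (8 * n + 6) = Nat.card {c : Fin 7 → ℕ //
      Monotone c ∧ ∀ l : Fin 7, c l ≤ (8 * n + 6) * (l.1 + 1) / 8} := rfl
  have h2 : cnt [n, 2*n+1, 3*n+2, 4*n+3, 5*n+3, 6*n+4, 7*n+5] 0 = Nat.card {c : Fin 7 → ℕ //
      Monotone c ∧ (∀ l : Fin 7, c l ≤ [n, 2*n+1, 3*n+2, 4*n+3, 5*n+3, 6*n+4, 7*n+5].get l) ∧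
      (∀ l : Fin 7, 0 ≤ c l)} := rfl
  rw [h1, h2]
  exact Nat.card_congr (Equiv.subtypeEquivRight key)

lemma K1 (n m : ℕ) (hm : m ≤ 7*n+5+1) :
    (cnt [7*n+5] m : ℚ) = (6:ℚ) + (7:ℚ)*((n:ℚ)) + (-1:ℚ)*(m:ℚ) := by
  rw [cnt_cons]
  simp only [cnt_nil]
  rw [Finset.sum_const, smul_eq_mul, mul_one, Nat.card_Icc, Nat.cast_sub (by omega)]
  push_cast
  ring

lemma K2 (n m : ℕ) (hm : m ≤ 6*n+4+1) :
    (cnt [6*n+4, 7*n+5] m : ℚ) = (20:ℚ) + (44:ℚ)*((n:ℚ)) + (24:ℚ)*((n:ℚ))^2 + ((-13:ℚ)/2)*(m:ℚ) + (-7:ℚ)*(m:ℚ)*((n:ℚ)) + ((1:ℚ)/2)*(m:ℚ)^2 := by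
  rw [cnt_cons, Nat.cast_sum,
    Finset.sum_congr rfl (fun j hj => K1 n j (by rw [Finset.mem_Icc] at hj; omega))]
  refine Eq.trans (sum_Icc_eval _ (fun j : ℕ => ((13:ℚ)/2)*(j:ℚ) + (7:ℚ)*(j:ℚ)*((n:ℚ)) + ((-1:ℚ)/2)*(j:ℚ)^2)
    (fun j => by push_cast; ring) m (6*n+4) (by omega)) ?_
  push_cast
  ring

lemma K3 (n m : ℕ) (hm : m ≤ 5*n+3+1) :
    (cnt [5*n+3, 6*n+4, 7*n+5] m : ℚ) = (48:ℚ) + ((452:ℚ)/3)*((n:ℚ)) + (156:ℚ)*((n:ℚ))^2 + ((160:ℚ)/3)*((n:ℚ))^3 + ((-70:ℚ)/3)*(m:ℚ) + ((-95:ℚ)/2)*(m:ℚ)*((n:ℚ)) + (-24:ℚ)*(m:ℚ)*((n:ℚ))^2 + ((7:ℚ)/2)*(m:ℚ)^2 + ((7:ℚ)/2)*(m:ℚ)^2*((n:ℚ)) + ((-1:ℚ)/6)*(m:ℚ)^3 := by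
  rw [cnt_cons, Nat.cast_sum,
    Finset.sum_congr rfl (fun j hj => K2 n j (by rw [Finset.mem_Icc] at hj; omega))]
  refine Eq.trans (sum_Icc_eval _ (fun j : ℕ => ((70:ℚ)/3)*(j:ℚ) + ((95:ℚ)/2)*(j:ℚ)*((n:ℚ)) + (24:ℚ)*(j:ℚ)*((n:ℚ))^2 + ((-7:ℚ)/2)*(j:ℚ)^2 + ((-7:ℚ)/2)*(j:ℚ)^2*((n:ℚ)) + ((1:ℚ)/6)*(j:ℚ)^3)
    (fun j => by push_cast; ring) m (5*n+3) (by omega)) ?_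
  push_cast
  ring

lemma K4 (n m : ℕ) (hm : m ≤ 4*n+3+1) :
    (cnt [4*n+3, 5*n+3, 6*n+4, 7*n+5] m : ℚ) = (95:ℚ) + ((1123:ℚ)/3)*((n:ℚ)) + ((1646:ℚ)/3)*((n:ℚ))^2 + ((1064:ℚ)/3)*((n:ℚ))^3 + ((256:ℚ)/3)*((n:ℚ))^4 + ((-241:ℚ)/4)*(m:ℚ) + (-175:ℚ)*(m:ℚ)*((n:ℚ)) + (-168:ℚ)*(m:ℚ)*((n:ℚ))^2 + ((-160:ℚ)/3)*(m:ℚ)*((n:ℚ))^3 + ((323:ℚ)/24)*(m:ℚ)^2 + ((51:ℚ)/2)*(m:ℚ)^2*((n:ℚ)) + (12:ℚ)*(m:ℚ)^2*((n:ℚ))^2 + ((-5:ℚ)/4)*(m:ℚ)^3 + ((-7:ℚ)/6)*(m:ℚ)^3*((n:ℚ)) + ((1:ℚ)/24)*(m:ℚ)^4 := by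
  rw [cnt_cons, Nat.cast_sum,
    Finset.sum_congr rfl (fun j hj => K3 n j (by rw [Finset.mem_Icc] at hj; omega))]
  refine Eq.trans (sum_Icc_eval _ (fun j : ℕ => ((241:ℚ)/4)*(j:ℚ) + (175:ℚ)*(j:ℚ)*((n:ℚ)) + (168:ℚ)*(j:ℚ)*((n:ℚ))^2 + ((160:ℚ)/3)*(j:ℚ)*((n:ℚ))^3 + ((-323:ℚ)/24)*(j:ℚ)^2 + ((-51:ℚ)/2)*(j:ℚ)^2*((n:ℚ)) + (-12:ℚ)*(j:ℚ)^2*((n:ℚ))^2 + ((5:ℚ)/4)*(j:ℚ)^3 + ((7:ℚ)/6)*(j:ℚ)^3*((n:ℚ)) + ((-1:ℚ)/24)*(j:ℚ)^4)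
    (fun j => by push_cast; ring) m (4*n+3) (by omega)) ?_
  push_cast
  ring

lemma K5 (n m : ℕ) (hm : m ≤ 3*n+2+1) :
    (cnt [3*n+2, 4*n+3, 5*n+3, 6*n+4, 7*n+5] m : ℚ) = (161:ℚ) + ((14907:ℚ)/20)*((n:ℚ)) + ((10965:ℚ)/8)*((n:ℚ))^2 + ((5007:ℚ)/4)*((n:ℚ))^3 + ((4543:ℚ)/8)*((n:ℚ))^4 + ((512:ℚ)/5)*((n:ℚ))^5 + ((-3821:ℚ)/30)*(m:ℚ) + ((-5593:ℚ)/12)*(m:ℚ)*((n:ℚ)) + ((-1904:ℚ)/3)*(m:ℚ)*((n:ℚ))^2 + ((-1144:ℚ)/3)*(m:ℚ)*((n:ℚ))^3 + ((-256:ℚ)/3)*(m:ℚ)*((n:ℚ))^4 + ((223:ℚ)/6)*(m:ℚ)^2 + ((2413:ℚ)/24)*(m:ℚ)^2*((n:ℚ)) + (90:ℚ)*(m:ℚ)^2*((n:ℚ))^2 + ((80:ℚ)/3)*(m:ℚ)^2*((n:ℚ))^3 + ((-41:ℚ)/8)*(m:ℚ)^3 + ((-109:ℚ)/12)*(m:ℚ)^3*((n:ℚ))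 + (-4:ℚ)*(m:ℚ)^3*((n:ℚ))^2 + ((1:ℚ)/3)*(m:ℚ)^4 + ((7:ℚ)/24)*(m:ℚ)^4*((n:ℚ)) + ((-1:ℚ)/120)*(m:ℚ)^5 := by
  rw [cnt_cons, Nat.cast_sum,
    Finset.sum_congr rfl (fun j hj => K4 n j (by rw [Finset.mem_Icc] at hj; omega))]
  refine Eq.trans (sum_Icc_eval _ (fun j : ℕ => ((3821:ℚ)/30)*(j:ℚ) + ((5593:ℚ)/12)*(j:ℚ)*((n:ℚ)) + ((1904:ℚ)/3)*(j:ℚ)*((n:ℚ))^2 + ((1144:ℚ)/3)*(j:ℚ)*((n:ℚ))^3 + ((256:ℚ)/3)*(j:ℚ)*((n:ℚ))^4 + ((-223:ℚ)/6)*(j:ℚ)^2 + ((-2413:ℚ)/24)*(j:ℚ)^2*((n:ℚ)) + (-90:ℚ)*(j:ℚ)^2*((n:ℚ))^2 + ((-80:ℚ)/3)*(j:ℚ)^2*((n:ℚ))^3 + ((41:ℚ)/8)*(j:ℚ)^3 + ((109:ℚ)/12)*(j:ℚ)^3*((n:ℚ)) + (4:ℚ)*(j:ℚ)^3*((n:ℚ))^2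 + ((-1:ℚ)/3)*(j:ℚ)^4 + ((-7:ℚ)/24)*(j:ℚ)^4*((n:ℚ)) + ((1:ℚ)/120)*(j:ℚ)^5)
    (fun j => by push_cast; ring) m (3*n+2) (by omega)) ?_
  push_cast
  ring

lemma K6 (n m : ℕ) (hm : m ≤ 2*n+1+1) :
    (cnt [2*n+1, 3*n+2, 4*n+3, 5*n+3, 6*n+4, 7*n+5] m : ℚ) = (227:ℚ) + ((17837:ℚ)/15)*((n:ℚ)) + ((464011:ℚ)/180)*((n:ℚ))^2 + ((35527:ℚ)/12)*((n:ℚ))^3 + ((68405:ℚ)/36)*((n:ℚ))^4 + ((38777:ℚ)/60)*((n:ℚ))^5 + ((4096:ℚ)/45)*((n:ℚ))^6 + ((-3463:ℚ)/15)*(m:ℚ) + ((-35825:ℚ)/36)*(m:ℚ)*((n:ℚ)) + ((-40871:ℚ)/24)*(m:ℚ)*((n:ℚ))^2 + ((-52087:ℚ)/36)*(m:ℚ)*((n:ℚ))^3 + ((-14653:ℚ)/24)*(m:ℚ)*((n:ℚ))^4 + ((-512:ℚ)/5)*(m:ℚ)*((n:ℚ))^5 + ((30077:ℚ)/360)*(m:ℚ)^2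 + ((3427:ℚ)/12)*(m:ℚ)^2*((n:ℚ)) + ((1090:ℚ)/3)*(m:ℚ)^2*((n:ℚ))^2 + (204:ℚ)*(m:ℚ)^2*((n:ℚ))^3 + ((128:ℚ)/3)*(m:ℚ)^2*((n:ℚ))^4 + ((-241:ℚ)/16)*(m:ℚ)^3 + ((-2747:ℚ)/72)*(m:ℚ)^3*((n:ℚ)) + (-32:ℚ)*(m:ℚ)^3*((n:ℚ))^2 + ((-80:ℚ)/9)*(m:ℚ)^3*((n:ℚ))^3 + ((209:ℚ)/144)*(m:ℚ)^4 + ((29:ℚ)/12)*(m:ℚ)^4*((n:ℚ)) + (1:ℚ)*(m:ℚ)^4*((n:ℚ))^2 + ((-17:ℚ)/240)*(m:ℚ)^5 + ((-7:ℚ)/120)*(m:ℚ)^5*((n:ℚ)) + ((1:ℚ)/720)*(m:ℚ)^6 := by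
  rw [cnt_cons, Nat.cast_sum,
    Finset.sum_congr rfl (fun j hj => K5 n j (by rw [Finset.mem_Icc] at hj; omega))]
  refine Eq.trans (sum_Icc_eval _ (fun j : ℕ => ((3463:ℚ)/15)*(j:ℚ) + ((35825:ℚ)/36)*(j:ℚ)*((n:ℚ)) + ((40871:ℚ)/24)*(j:ℚ)*((n:ℚ))^2 + ((52087:ℚ)/36)*(j:ℚ)*((n:ℚ))^3 + ((14653:ℚ)/24)*(j:ℚ)*((n:ℚ))^4 + ((512:ℚ)/5)*(j:ℚ)*((n:ℚ))^5 + ((-30077:ℚ)/360)*(j:ℚ)^2 + ((-3427:ℚ)/12)*(j:ℚ)^2*((n:ℚ)) + ((-1090:ℚ)/3)*(j:ℚ)^2*((n:ℚ))^2 + (-204:ℚ)*(j:ℚ)^2*((n:ℚ))^3 + ((-128:ℚ)/3)*(j:ℚ)^2*((n:ℚ))^4 + ((241:ℚ)/16)*(j:ℚ)^3 + ((2747:ℚ)/72)*(j:ℚ)^3*((n:ℚ)) + (32:ℚ)*(j:ℚ)^3*((n:ℚ))^2 + ((80:ℚ)/9)*(j:ℚ)^3*((n:ℚ))^3 + ((-209:ℚ)/144)*(j:ℚ)^4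 + ((-29:ℚ)/12)*(j:ℚ)^4*((n:ℚ)) + (-1:ℚ)*(j:ℚ)^4*((n:ℚ))^2 + ((17:ℚ)/240)*(j:ℚ)^5 + ((7:ℚ)/120)*(j:ℚ)^5*((n:ℚ)) + ((-1:ℚ)/720)*(j:ℚ)^6)
    (fun j => by push_cast; ring) m (2*n+1) (by omega)) ?_
  push_cast
  ring

lemma K7 (n m : ℕ) (hm : m ≤ n+1) :
    (cnt [n, 2*n+1, 3*n+2, 4*n+3, 5*n+3, 6*n+4, 7*n+5] m : ℚ) = (227:ℚ) + ((276061:ℚ)/210)*((n:ℚ)) + ((6479:ℚ)/2)*((n:ℚ))^2 + ((198178:ℚ)/45)*((n:ℚ))^3 + ((10702:ℚ)/3)*((n:ℚ))^4 + ((77488:ℚ)/45)*((n:ℚ))^5 + ((1376:ℚ)/3)*((n:ℚ))^6 + ((16384:ℚ)/315)*((n:ℚ))^7 + ((-14965:ℚ)/42)*(m:ℚ) + ((-624319:ℚ)/360)*(m:ℚ)*((n:ℚ)) + ((-502537:ℚ)/144)*(m:ℚ)*((n:ℚ))^2 + ((-267697:ℚ)/72)*(m:ℚ)*((n:ℚ))^3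 + ((-106201:ℚ)/48)*(m:ℚ)*((n:ℚ))^4 + ((-41849:ℚ)/60)*(m:ℚ)*((n:ℚ))^5 + ((-4096:ℚ)/45)*(m:ℚ)*((n:ℚ))^6 + ((4829:ℚ)/30)*(m:ℚ)^2 + ((116981:ℚ)/180)*(m:ℚ)^2*((n:ℚ)) + ((49975:ℚ)/48)*(m:ℚ)^2*((n:ℚ))^2 + ((59591:ℚ)/72)*(m:ℚ)^2*((n:ℚ))^3 + ((15677:ℚ)/48)*(m:ℚ)^2*((n:ℚ))^4 + ((256:ℚ)/5)*(m:ℚ)^2*((n:ℚ))^5 + ((-12911:ℚ)/360)*(m:ℚ)^3 + ((-16571:ℚ)/144)*(m:ℚ)^3*((n:ℚ)) + ((-1237:ℚ)/9)*(m:ℚ)^3*((n:ℚ))^2 + ((-652:ℚ)/9)*(m:ℚ)^3*((n:ℚ))^3 + ((-128:ℚ)/9)*(m:ℚ)^3*((n:ℚ))^4 + ((217:ℚ)/48)*(m:ℚ)^4 + ((517:ℚ)/48)*(m:ℚ)^4*((n:ℚ)) + ((17:ℚ)/2)*(m:ℚ)^4*((n:ℚ))^2 + ((20:ℚ)/9)*(m:ℚ)^4*((n:ℚ))^3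 + ((-47:ℚ)/144)*(m:ℚ)^5 + ((-41:ℚ)/80)*(m:ℚ)^5*((n:ℚ)) + ((-1:ℚ)/5)*(m:ℚ)^5*((n:ℚ))^2 + ((1:ℚ)/80)*(m:ℚ)^6 + ((7:ℚ)/720)*(m:ℚ)^6*((n:ℚ)) + ((-1:ℚ)/5040)*(m:ℚ)^7 := by
  rw [cnt_cons, Nat.cast_sum,
    Finset.sum_congr rfl (fun j hj => K6 n j (by rw [Finset.mem_Icc] at hj; omega))]
  refine Eq.trans (sum_Icc_eval _ (fun j : ℕ => ((14965:ℚ)/42)*(j:ℚ) + ((624319:ℚ)/360)*(j:ℚ)*((n:ℚ)) + ((502537:ℚ)/144)*(j:ℚ)*((n:ℚ))^2 + ((267697:ℚ)/72)*(j:ℚ)*((n:ℚ))^3 + ((106201:ℚ)/48)*(j:ℚ)*((n:ℚ))^4 + ((41849:ℚ)/60)*(j:ℚ)*((n:ℚ))^5 + ((4096:ℚ)/45)*(j:ℚ)*((n:ℚ))^6 + ((-4829:ℚ)/30)*(j:ℚ)^2 + ((-116981:ℚ)/180)*(j:ℚ)^2*((n:ℚ)) + ((-49975:ℚ)/48)*(j:ℚ)^2*((n:ℚ))^2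 + ((-59591:ℚ)/72)*(j:ℚ)^2*((n:ℚ))^3 + ((-15677:ℚ)/48)*(j:ℚ)^2*((n:ℚ))^4 + ((-256:ℚ)/5)*(j:ℚ)^2*((n:ℚ))^5 + ((12911:ℚ)/360)*(j:ℚ)^3 + ((16571:ℚ)/144)*(j:ℚ)^3*((n:ℚ)) + ((1237:ℚ)/9)*(j:ℚ)^3*((n:ℚ))^2 + ((652:ℚ)/9)*(j:ℚ)^3*((n:ℚ))^3 + ((128:ℚ)/9)*(j:ℚ)^3*((n:ℚ))^4 + ((-217:ℚ)/48)*(j:ℚ)^4 + ((-517:ℚ)/48)*(j:ℚ)^4*((n:ℚ)) + ((-17:ℚ)/2)*(j:ℚ)^4*((n:ℚ))^2 + ((-20:ℚ)/9)*(j:ℚ)^4*((n:ℚ))^3 + ((47:ℚ)/144)*(j:ℚ)^5 + ((41:ℚ)/80)*(j:ℚ)^5*((n:ℚ)) + ((1:ℚ)/5)*(j:ℚ)^5*((n:ℚ))^2 + ((-1:ℚ)/80)*(j:ℚ)^6 + ((-7:ℚ)/720)*(j:ℚ)^6*((n:ℚ)) + ((1:ℚ)/5040)*(j:ℚ)^7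)
    (fun j => by push_cast; ring) m (n) (by omega)) ?_
  push_cast
  ring

lemma d8 (n : ℕ) : (8*n+15).descFactorial 8 = (8*n+8)*(8*n+9)*(8*n+10)*(8*n+11)*(8*n+12)*(8*n+13)*(8*n+14)*(8*n+15) := by
  simp only [Nat.descFactorial_succ, Nat.descFactorial_zero, Nat.sub_zero, mul_one]
  rw [show 8*n+15-1 = 8*n+14 from by omega]
  rw [show 8*n+15-2 = 8*n+13 from by omega]
  rw [show 8*n+15-3 = 8*n+12 from by omega]
  rw [show 8*n+15-4 = 8*n+11 from by omega]
  rw [show 8*n+15-5 = 8*n+10 from by omega]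
  rw [show 8*n+15-6 = 8*n+9 from by omega]
  rw [show 8*n+15-7 = 8*n+8 from by omega]
  try ring

lemma d7 (n : ℕ) : (7*n+13).descFactorial 7 = (7*n+7)*(7*n+8)*(7*n+9)*(7*n+10)*(7*n+11)*(7*n+12)*(7*n+13) := by
  simp only [Nat.descFactorial_succ, Nat.descFactorial_zero, Nat.sub_zero, mul_one]
  rw [show 7*n+13-1 = 7*n+12 from by omega]
  rw [show 7*n+13-2 = 7*n+11 from by omega]
  rw [show 7*n+13-3 = 7*n+10 from by omega]
  rw [show 7*n+13-4 = 7*n+9 from by omega]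
  rw [show 7*n+13-5 = 7*n+8 from by omega]
  rw [show 7*n+13-6 = 7*n+7 from by omega]
  try ring

lemma d6 (n : ℕ) : (6*n+11).descFactorial 6 = (6*n+6)*(6*n+7)*(6*n+8)*(6*n+9)*(6*n+10)*(6*n+11) := by
  simp only [Nat.descFactorial_succ, Nat.descFactorial_zero, Nat.sub_zero, mul_one]
  rw [show 6*n+11-1 = 6*n+10 from by omega]
  rw [show 6*n+11-2 = 6*n+9 from by omega]
  rw [show 6*n+11-3 = 6*n+8 from by omega]
  rw [show 6*n+11-4 = 6*n+7 from by omega]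
  rw [show 6*n+11-5 = 6*n+6 from by omega]
  try ring

lemma d2 (n : ℕ) : (2*n+3).descFactorial 2 = (2*n+2)*(2*n+3) := by
  simp only [Nat.descFactorial_succ, Nat.descFactorial_zero, Nat.sub_zero, mul_one]
  rw [show 2*n+3-1 = 2*n+2 from by omega]
  try ring

lemma d5 (n : ℕ) : (5*n+9).descFactorial 5 = (5*n+5)*(5*n+6)*(5*n+7)*(5*n+8)*(5*n+9) := by
  simp only [Nat.descFactorial_succ, Nat.descFactorial_zero, Nat.sub_zero, mul_one]
  rw [show 5*n+9-1 = 5*n+8 from by omega]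
  rw [show 5*n+9-2 = 5*n+7 from by omega]
  rw [show 5*n+9-3 = 5*n+6 from by omega]
  rw [show 5*n+9-4 = 5*n+5 from by omega]
  try ring

lemma d3 (n : ℕ) : (3*n+5).descFactorial 3 = (3*n+3)*(3*n+4)*(3*n+5) := by
  simp only [Nat.descFactorial_succ, Nat.descFactorial_zero, Nat.sub_zero, mul_one]
  rw [show 3*n+5-1 = 3*n+4 from by omega]
  rw [show 3*n+5-2 = 3*n+3 from by omega]
  try ring


lemma cast_choose (N k : ℕ) :
    (N.choose k : ℚ) = (N.descFactorial k : ℚ) / (k.factorial : ℚ) := by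
  rw [Nat.descFactorial_eq_factorial_mul_choose]
  push_cast
  rw [mul_comm, mul_div_assoc, div_self (by positivity), mul_one]

theorem dyck_count_eight (n : ℕ) (hn : 1 ≤ n) :
    (dyckCount 8 (8 * n + 6) : ℚ) =
      rectCatalan 8 (8 * n + 7) - rectCatalan 7 (7 * n + 6) -
        rectCatalan 6 (6 * n + 5) * rectCatalan 2 (2 * n + 1) -
        rectCatalan 5 (5 * n + 4) * rectCatalan 3 (3 * n + 2) := by
  rw [dyck_eq, K7 n 0 (by omega)]
  simp only [rectCatalan]
  rw [show 8 + (8 * n + 7) = 8*n+15 from by ring, show 7 + (7 * n + 6) = 7*n+13 from by ring,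
    show 6 + (6 * n + 5) = 6*n+11 from by ring, show 2 + (2 * n + 1) = 2*n+3 from by ring,
    show 5 + (5 * n + 4) = 5*n+9 from by ring, show 3 + (3 * n + 2) = 3*n+5 from by ring]
  rw [cast_choose, cast_choose, cast_choose, cast_choose, cast_choose, cast_choose,
    d8, d7, d6, d2, d5, d3]
  have h8 : ((8*n+15 : ℕ) : ℚ) ≠ 0 := by positivity
  have h7 : ((7*n+13 : ℕ) : ℚ) ≠ 0 := by positivity
  have h6 : ((6*n+11 : ℕ) : ℚ) ≠ 0 := by positivity
  have h2 : ((2*n+3 : ℕ) : ℚ) ≠ 0 := by positivity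
  have h5 : ((5*n+9 : ℕ) : ℚ) ≠ 0 := by positivity
  have h3 : ((3*n+5 : ℕ) : ℚ) ≠ 0 := by positivity
  simp only [Nat.factorial]
  push_cast
  push_cast at h8 h7 h6 h2 h5 h3
  field_simp
  ring
end

section
/- For every integer n ≥ 1, the number of Dyck paths in the 6 × (6n+2) rectangle satisfies |D_{6,6n+2}| = C(6, 6n+1) + C(5, 5n+1) + C(4, 4n+1)·C(2, 2n+1) + C(3, 3n+1)·C(3, 3n+1), where C(s,t) := (1/(s+t))·binom(s+t, s). -/
namespace DyckSix

/-! ### Summation machinery -/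

lemma sum_range_of_step (f F : ℕ → ℚ) (h0 : F 0 = 0) (hF : ∀ m, F (m + 1) = F m + f m) :
    ∀ m, ∑ x ∈ Finset.range m, f x = F m := by
  intro m
  induction m with
  | zero => simpa using h0.symm
  | succ k ih => rw [Finset.sum_range_succ, ih, hF]

lemma sum_Icc_eq (f F : ℕ → ℚ) (h0 : F 0 = 0) (hF : ∀ m, F (m + 1) = F m + f m)
    (a b : ℕ) (h : a ≤ b + 1) :
    ∑ x ∈ Finset.Icc a b, f x = F (b + 1) - F a := by
  rw [← Finset.Ico_add_one_right_eq_Icc, Finset.sum_Ico_eq_sub f h,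
    sum_range_of_step f F h0 hF, sum_range_of_step f F h0 hF]

/-! ### The layer polynomials -/

noncomputable def q4 (n a : ℕ) : ℚ :=
  (3:ℚ) + (-5/2:ℚ)*(a:ℚ) + (1/2:ℚ)*(a:ℚ)^2 + (12:ℚ)*(n:ℚ) + (-5:ℚ)*(n:ℚ)*(a:ℚ) + (12:ℚ)*(n:ℚ)^2

noncomputable def q3 (n a : ℕ) : ℚ :=
  (4:ℚ) + (-13/3:ℚ)*(a:ℚ) + (3/2:ℚ)*(a:ℚ)^2 + (-1/6:ℚ)*(a:ℚ)^3 + (20:ℚ)*(n:ℚ) +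
    (-29/2:ℚ)*(n:ℚ)*(a:ℚ) + (5/2:ℚ)*(n:ℚ)*(a:ℚ)^2 + (33:ℚ)*(n:ℚ)^2 +
    (-12:ℚ)*(n:ℚ)^2*(a:ℚ) + (18:ℚ)*(n:ℚ)^3

noncomputable def q2 (n a : ℕ) : ℚ :=
  (4:ℚ) + (-77/12:ℚ)*(a:ℚ) + (71/24:ℚ)*(a:ℚ)^2 + (-7/12:ℚ)*(a:ℚ)^3 + (1/24:ℚ)*(a:ℚ)^4 +
    (145/6:ℚ)*(n:ℚ) + (-83/3:ℚ)*(n:ℚ)*(a:ℚ) + (17/2:ℚ)*(n:ℚ)*(a:ℚ)^2 +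
    (-5/6:ℚ)*(n:ℚ)*(a:ℚ)^3 + (107/2:ℚ)*(n:ℚ)^2 + (-39:ℚ)*(n:ℚ)^2*(a:ℚ) +
    (6:ℚ)*(n:ℚ)^2*(a:ℚ)^2 + (154/3:ℚ)*(n:ℚ)^3 + (-18:ℚ)*(n:ℚ)^3*(a:ℚ) + (18:ℚ)*(n:ℚ)^4

noncomputable def Pp (n : ℕ) : ℚ :=
  (4:ℚ) + (509/20:ℚ)*(n:ℚ) + (507/8:ℚ)*(n:ℚ)^2 + (309/4:ℚ)*(n:ℚ)^3 + (369/8:ℚ)*(n:ℚ)^4 +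
    (54/5:ℚ)*(n:ℚ)^5

lemma L4 (n a : ℕ) (ha : a ≤ 4*n+2) :
    ∑ x ∈ Finset.Icc a (4*n+1), ((5*n+2 : ℚ) - (x:ℚ)) = q4 n a := by
  rw [sum_Icc_eq (fun x => (5*(n:ℚ)+2 : ℚ) - (x:ℚ))
      (fun m => (5/2:ℚ)*(m:ℚ) + (-1/2:ℚ)*(m:ℚ)^2 + (5:ℚ)*(n:ℚ)*(m:ℚ))
      (by norm_num) (fun m => by push_cast; ring) a (4*n+1) (by omega)]
  unfold q4; push_cast; ring

lemma L3 (n a : ℕ) (ha : a ≤ 3*n+2) :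
    ∑ x ∈ Finset.Icc a (3*n+1), q4 n x = q3 n a := by
  rw [sum_Icc_eq (fun x => q4 n x)
      (fun m => (13/3:ℚ)*(m:ℚ) + (-3/2:ℚ)*(m:ℚ)^2 + (1/6:ℚ)*(m:ℚ)^3 + (29/2:ℚ)*(n:ℚ)*(m:ℚ) +
        (-5/2:ℚ)*(n:ℚ)*(m:ℚ)^2 + (12:ℚ)*(n:ℚ)^2*(m:ℚ))
      (by norm_num) (fun m => by unfold q4; push_cast; ring) a (3*n+1) (by omega)]
  unfold q3; push_cast; ring

lemma L2 (n a : ℕ) (ha : a ≤ 2*n+1) :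
    ∑ x ∈ Finset.Icc a (2*n), q3 n x = q2 n a := by
  rw [sum_Icc_eq (fun x => q3 n x)
      (fun m => (77/12:ℚ)*(m:ℚ) + (-71/24:ℚ)*(m:ℚ)^2 + (7/12:ℚ)*(m:ℚ)^3 + (-1/24:ℚ)*(m:ℚ)^4 +
        (83/3:ℚ)*(n:ℚ)*(m:ℚ) + (-17/2:ℚ)*(n:ℚ)*(m:ℚ)^2 + (5/6:ℚ)*(n:ℚ)*(m:ℚ)^3 +
        (39:ℚ)*(n:ℚ)^2*(m:ℚ) + (-6:ℚ)*(n:ℚ)^2*(m:ℚ)^2 + (18:ℚ)*(n:ℚ)^3*(m:ℚ))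
      (by norm_num) (fun m => by unfold q3; push_cast; ring) a (2*n) (by omega)]
  unfold q2; push_cast; ring

lemma L1 (n : ℕ) :
    ∑ x ∈ Finset.Icc 0 n, q2 n x = Pp n := by
  rw [sum_Icc_eq (fun x => q2 n x)
      (fun m => (77/10:ℚ)*(m:ℚ) + (-29/6:ℚ)*(m:ℚ)^2 + (31/24:ℚ)*(m:ℚ)^3 + (-1/6:ℚ)*(m:ℚ)^4 +
        (1/120:ℚ)*(m:ℚ)^5 + (473/12:ℚ)*(n:ℚ)*(m:ℚ) + (-439/24:ℚ)*(n:ℚ)*(m:ℚ)^2 +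
        (13/4:ℚ)*(n:ℚ)*(m:ℚ)^3 + (-5/24:ℚ)*(n:ℚ)*(m:ℚ)^4 + (74:ℚ)*(n:ℚ)^2*(m:ℚ) +
        (-45/2:ℚ)*(n:ℚ)^2*(m:ℚ)^2 + (2:ℚ)*(n:ℚ)^2*(m:ℚ)^3 + (181/3:ℚ)*(n:ℚ)^3*(m:ℚ) +
        (-9:ℚ)*(n:ℚ)^3*(m:ℚ)^2 + (18:ℚ)*(n:ℚ)^4*(m:ℚ))
      (by norm_num) (fun m => by unfold q2; push_cast; ring) 0 n (by omega)]
  unfold Pp; push_cast; ring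

/-! ### The bijection -/

/-- The finset of tuples `(c1,c2,c3,c4,c5)` with `0 ≤ c1 ≤ n`, `c1 ≤ c2 ≤ 2n`,
`c2 ≤ c3 ≤ 3n+1`, `c3 ≤ c4 ≤ 4n+1`, `c4 ≤ c5 ≤ 5n+1`. -/
def tupleSet (n : ℕ) : Finset (Σ _ : ℕ, Σ _ : ℕ, Σ _ : ℕ, Σ _ : ℕ, ℕ) :=
  (Finset.Icc 0 n).sigma fun c1 => (Finset.Icc c1 (2*n)).sigma fun c2 =>
    (Finset.Icc c2 (3*n+1)).sigma fun c3 => (Finset.Icc c3 (4*n+1)).sigma fun c4 =>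
      Finset.Icc c4 (5*n+1)

def dEquiv (n : ℕ) :
    {c : Fin 5 → ℕ // Monotone c ∧ ∀ l : Fin 5, c l ≤ (6*n+2) * (l.1 + 1) / 6} ≃
    {x // x ∈ tupleSet n} where
  toFun := fun ⟨f, hf⟩ =>
    ⟨⟨f 0, f 1, f 2, f 3, f 4⟩, by
      have h0 : f 0 ≤ (6*n+2) * (0 + 1) / 6 := hf.2 0
      have h1 : f 1 ≤ (6*n+2) * (1 + 1) / 6 := hf.2 1
      have h2 : f 2 ≤ (6*n+2) * (2 + 1) / 6 := hf.2 2
      have h3 : f 3 ≤ (6*n+2) * (3 + 1) / 6 := hf.2 3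
      have h4 : f 4 ≤ (6*n+2) * (4 + 1) / 6 := hf.2 4
      have m01 : f 0 ≤ f 1 := hf.1 (by decide)
      have m12 : f 1 ≤ f 2 := hf.1 (by decide)
      have m23 : f 2 ≤ f 3 := hf.1 (by decide)
      have m34 : f 3 ≤ f 4 := hf.1 (by decide)
      simp only [tupleSet, Finset.mem_sigma, Finset.mem_Icc]
      omega⟩
  invFun := fun ⟨⟨a, b, c, d, e⟩, h⟩ =>
    ⟨![a, b, c, d, e], by
      simp only [tupleSet, Finset.mem_sigma, Finset.mem_Icc] at h
      constructor
      · simp only [monotone_vecCons]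
        refine ⟨?_, ?_, ?_, ?_, monotone_vecEmpty⟩ <;> simp <;> omega
      · intro l
        fin_cases l <;> simp <;> omega⟩
  left_inv := fun ⟨f, hf⟩ => by
    apply Subtype.ext
    funext i
    fin_cases i <;> rfl
  right_inv := fun ⟨⟨a, b, c, d, e⟩, h⟩ => rfl

lemma count_eq (n : ℕ) :
    dyckCount 6 (6*n+2) =
      ∑ c1 ∈ Finset.Icc 0 n, ∑ c2 ∈ Finset.Icc c1 (2*n), ∑ c3 ∈ Finset.Icc c2 (3*n+1),
        ∑ c4 ∈ Finset.Icc c3 (4*n+1), (Finset.Icc c4 (5*n+1)).card := by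
  have key : Nat.card {x // x ∈ tupleSet n} =
      ∑ c1 ∈ Finset.Icc 0 n, ∑ c2 ∈ Finset.Icc c1 (2*n), ∑ c3 ∈ Finset.Icc c2 (3*n+1),
        ∑ c4 ∈ Finset.Icc c3 (4*n+1), (Finset.Icc c4 (5*n+1)).card := by
    rw [Nat.card_eq_fintype_card, Fintype.card_coe, tupleSet]
    simp only [Finset.card_sigma]
  exact (Nat.card_congr (dEquiv n)).trans key

/-! ### Binomial coefficient evaluations -/

lemma choose_two (m : ℕ) :
    (((m+2).choose 2 : ℕ) : ℚ) = (m+1)*(m+2)/2 := by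
  have hden : ((Nat.factorial 2 : ℕ) : ℚ) = 2 := by norm_num [Nat.factorial]
  have hm : ((Nat.factorial m : ℕ) : ℚ) ≠ 0 := Nat.cast_ne_zero.2 (Nat.factorial_ne_zero _)
  rw [Nat.cast_choose ℚ (by omega : 2 ≤ m+2), show m+2-2 = m from by omega,
    show m+2 = m+1+1 from rfl, Nat.factorial_succ, Nat.factorial_succ, hden]
  push_cast
  field_simp
  ring

lemma choose_three (m : ℕ) :
    (((m+3).choose 3 : ℕ) : ℚ) = (m+1)*(m+2)*(m+3)/6 := by
  have hden : ((Nat.factorial 3 : ℕ) : ℚ) = 6 := by norm_num [Nat.factorial]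
  have hm : ((Nat.factorial m : ℕ) : ℚ) ≠ 0 := Nat.cast_ne_zero.2 (Nat.factorial_ne_zero _)
  rw [Nat.cast_choose ℚ (by omega : 3 ≤ m+3), show m+3-3 = m from by omega,
    show m+3 = m+2+1 from rfl, Nat.factorial_succ, show m+2 = m+1+1 from rfl, Nat.factorial_succ, Nat.factorial_succ, hden]
  push_cast
  field_simp
  ring

lemma choose_four (m : ℕ) :
    (((m+4).choose 4 : ℕ) : ℚ) = (m+1)*(m+2)*(m+3)*(m+4)/24 := by
  have hden : ((Nat.factorial 4 : ℕ) : ℚ) = 24 := by norm_num [Nat.factorial]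
  have hm : ((Nat.factorial m : ℕ) : ℚ) ≠ 0 := Nat.cast_ne_zero.2 (Nat.factorial_ne_zero _)
  rw [Nat.cast_choose ℚ (by omega : 4 ≤ m+4), show m+4-4 = m from by omega,
    show m+4 = m+3+1 from rfl, Nat.factorial_succ, show m+3 = m+2+1 from rfl, Nat.factorial_succ, show m+2 = m+1+1 from rfl, Nat.factorial_succ, Nat.factorial_succ, hden]
  push_cast
  field_simp
  ring

lemma choose_five (m : ℕ) :
    (((m+5).choose 5 : ℕ) : ℚ) = (m+1)*(m+2)*(m+3)*(m+4)*(m+5)/120 := by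
  have hden : ((Nat.factorial 5 : ℕ) : ℚ) = 120 := by norm_num [Nat.factorial]
  have hm : ((Nat.factorial m : ℕ) : ℚ) ≠ 0 := Nat.cast_ne_zero.2 (Nat.factorial_ne_zero _)
  rw [Nat.cast_choose ℚ (by omega : 5 ≤ m+5), show m+5-5 = m from by omega,
    show m+5 = m+4+1 from rfl, Nat.factorial_succ, show m+4 = m+3+1 from rfl, Nat.factorial_succ, show m+3 = m+2+1 from rfl, Nat.factorial_succ, show m+2 = m+1+1 from rfl, Nat.factorial_succ, Nat.factorial_succ, hden]
  push_cast
  field_simp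
  ring

lemma choose_six (m : ℕ) :
    (((m+6).choose 6 : ℕ) : ℚ) = (m+1)*(m+2)*(m+3)*(m+4)*(m+5)*(m+6)/720 := by
  have hden : ((Nat.factorial 6 : ℕ) : ℚ) = 720 := by norm_num [Nat.factorial]
  have hm : ((Nat.factorial m : ℕ) : ℚ) ≠ 0 := Nat.cast_ne_zero.2 (Nat.factorial_ne_zero _)
  rw [Nat.cast_choose ℚ (by omega : 6 ≤ m+6), show m+6-6 = m from by omega,
    show m+6 = m+5+1 from rfl, Nat.factorial_succ, show m+5 = m+4+1 from rfl, Nat.factorial_succ, show m+4 = m+3+1 from rfl, Nat.factorial_succ, show m+3 = m+2+1 from rfl, Nat.factorial_succ, show m+2 = m+1+1 from rfl, Nat.factorial_succ, Nat.factorial_succ, hden]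
  push_cast
  field_simp
  ring

end DyckSix

open DyckSix

theorem dyck_count_six (n : ℕ) (hn : 1 ≤ n) :
    (dyckCount 6 (6 * n + 2) : ℚ) =
      rectCatalan 6 (6 * n + 1) + rectCatalan 5 (5 * n + 1) +
        rectCatalan 4 (4 * n + 1) * rectCatalan 2 (2 * n + 1) +
        rectCatalan 3 (3 * n + 1) * rectCatalan 3 (3 * n + 1) := by
  have hL : (dyckCount 6 (6 * n + 2) : ℚ) = Pp n := by
    rw [count_eq n]
    push_cast
    rw [← L1 n]
    apply Finset.sum_congr rfl
    intro c1 h1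
    rw [Finset.mem_Icc] at h1
    rw [← L2 n c1 (by omega)]
    apply Finset.sum_congr rfl
    intro c2 h2
    rw [Finset.mem_Icc] at h2
    rw [← L3 n c2 (by omega)]
    apply Finset.sum_congr rfl
    intro c3 h3
    rw [Finset.mem_Icc] at h3
    rw [← L4 n c3 (by omega)]
    apply Finset.sum_congr rfl
    intro c4 h4
    rw [Finset.mem_Icc] at h4
    rw [Nat.card_Icc, Nat.cast_sub (by omega)]
    push_cast
    ring
  rw [hL, rectCatalan, rectCatalan, rectCatalan, rectCatalan, rectCatalan,
    show 6 + (6*n+1) = (6*n+1)+6 by omega, show 5 + (5*n+1) = (5*n+1)+5 by omega,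
    show 4 + (4*n+1) = (4*n+1)+4 by omega, show 2 + (2*n+1) = (2*n+1)+2 by omega,
    show 3 + (3*n+1) = (3*n+1)+3 by omega,
    choose_six, choose_five, choose_four, choose_three, choose_two]
  have h6 : ((6*n+1+6 : ℕ) : ℚ) ≠ 0 := by positivity
  have h5 : ((5*n+1+5 : ℕ) : ℚ) ≠ 0 := by positivity
  have h4 : ((4*n+1+4 : ℕ) : ℚ) ≠ 0 := by positivity
  have h2 : ((2*n+1+2 : ℕ) : ℚ) ≠ 0 := by positivity
  have h3 : ((3*n+1+3 : ℕ) : ℚ) ≠ 0 := by positivity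
  unfold Pp
  push_cast at *
  field_simp
  ring
end

section
/- (Bizley's formula) Let a and b be positive integers with gcd(a,b) = 1, and for j ≥ 1 set φ_j := (1/(j(a+b)))·binom(j(a+b), ja) ∈ ℚ. Then, as formal power series over ℚ in the variable t, 1 + Σ_{d≥1} |D_{da, db}| t^d = exp( Σ_{j≥1} φ_j t^j ). -/
/-- The exponential `exp S = Σ_{m≥0} S^m / m!` of a formal power series `S`
(intended for `S` with zero constant term, in which case the `n`-th coefficient
only depends on the terms `S^m / m!` with `m ≤ n`). -/
noncomputable def expOf (S : PowerSeries ℚ) : PowerSeries ℚ :=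
  PowerSeries.mk fun d =>
    PowerSeries.coeff (R := ℚ) d (∑ m ∈ Finset.range (d + 1), (m.factorial : ℚ)⁻¹ • S ^ m)

/-!
Encode a lattice path as a word of south steps (`true`, weight `b`) and east steps (`false`,
weight `-a`). The `(da, db)`-Dyck paths are then the words of length `d(a+b)` with total weight
zero ("balanced") all of whose prefixes have nonnegative weight.

Mark one of the `d(a+b)` positions of such a Dyck word and cut it at the first return to weight
zero after the mark. As `gcd(a, b) = 1`, balanced words have length divisible by `a + b`, so this
yields a balanced word of some size `j` (read cyclically from the mark) and a Dyck word of size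
`d - j`. Conversely, rotating a balanced word to begin just after its first prefix minimum gives a
Dyck word whose first return to zero after its original first letter is at its end, so this is a
bijection (a cycle lemma). Writing `D_d = D_{da,db}`, it gives
`d(a+b) |D_d| = Σ_j binom(j(a+b), ja) |D_{d-j}|`, that is `G' = G φ'` for `G = Σ_d |D_d| t^d`
and `φ = Σ_j φ_j t^j`; with `G(0) = 1` this forces `G = exp φ`.
-/

namespace Bizley

open Finset PowerSeries

def words : ℕ → Finset (List Bool)
  | 0 => {[]}
  | n + 1 => (words n).image (true :: ·) ∪ (words n).image (false :: ·)

@[simp] lemma mem_words {n : ℕ} {w : List Bool} : w ∈ words n ↔ w.length = n := by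
  induction n generalizing w with
  | zero => simp [words]
  | succ n ih => cases w with
    | nil => simp [words]
    | cons x w => cases x <;> simp [words, ih]

lemma card_words_filter_count_true (n k : ℕ) :
    #{w ∈ words n | w.count true = k} = n.choose k := by
  induction n generalizing k with
  | zero => cases k <;> simp [words, filter_singleton]
  | succ n ih =>
    have hdisj : Disjoint ((words n).image (true :: ·)) ((words n).image (false :: ·)) := by
      simp [disjoint_left]
    rw [words, filter_union, card_union_of_disjoint (disjoint_filter_filter hdisj),
      filter_image, filter_image, card_image_of_injective _ List.cons_injective,
      card_image_of_injective _ List.cons_injective]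
    cases k with
    | zero => simp [ih]
    | succ k => simp [ih, Nat.choose_succ_succ]

section Weight

variable (a b : ℕ)

def weight (w : List Bool) : ℤ := b * w.count true - a * w.count false

def NonnegPrefixes (w : List Bool) : Prop := ∀ k, 0 ≤ weight a b (w.take k)

variable {a b}

@[simp] lemma weight_nil : weight a b [] = 0 := by simp [weight]

lemma weight_append (u v : List Bool) : weight a b (u ++ v) = weight a b u + weight a b v := by
  simp only [weight, List.count_append]; push_cast; ring

lemma weight_cons (x : Bool) (w : List Bool) :
    weight a b (x :: w) = (if x then (b : ℤ) else -a) + weight a b w := by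
  cases x <;> simp [weight] <;> ring

lemma weight_rotate (w : List Bool) (n : ℕ) : weight a b (w.rotate n) = weight a b w := by
  simp only [weight, (w.rotate_perm n).count_eq]

lemma weight_take_add (w : List Bool) (r t : ℕ) :
    weight a b (w.take (r + t)) = weight a b (w.take r) + weight a b ((w.drop r).take t) := by
  rw [List.take_add, weight_append]

lemma weight_eq_mul_count_true_sub (w : List Bool) :
    weight a b w = (a + b) * w.count true - a * w.length := by
  rw [weight, ← List.count_true_add_count_false w]; push_cast; ring

lemma weight_eq_zero_iff {j : ℕ} (hab : 0 < a + b) {w : List Bool}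
    (hw : w.length = j * (a + b)) : weight a b w = 0 ↔ w.count true = j * a := by
  rw [weight_eq_mul_count_true_sub, hw, sub_eq_zero]
  push_cast
  rw [show (a : ℤ) * (j * (a + b)) = (a + b) * (j * a) by ring,
    mul_right_inj' (by exact_mod_cast hab.ne')]
  exact_mod_cast Iff.rfl

lemma dvd_length_of_weight_eq_zero (hco : Nat.Coprime (a + b) a) {w : List Bool}
    (hw : weight a b w = 0) : a + b ∣ w.length := by
  rw [weight_eq_mul_count_true_sub, sub_eq_zero] at hw
  exact hco.dvd_of_dvd_mul_left ⟨w.count true, by exact_mod_cast hw.symm⟩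

lemma weight_mul_mul (d : ℕ) (w : List Bool) : weight (d * a) (d * b) w = d * weight a b w := by
  simp only [weight]; push_cast; ring

lemma nonnegPrefixes_mul_mul_iff {d : ℕ} (hd : 0 < d) {w : List Bool} :
    NonnegPrefixes (d * a) (d * b) w ↔ NonnegPrefixes a b w := by
  simp only [NonnegPrefixes, weight_mul_mul]
  exact forall_congr' fun k => mul_nonneg_iff_of_pos_left (by exact_mod_cast hd)

lemma NonnegPrefixes.append {u v : List Bool} (hu : NonnegPrefixes a b u)
    (hu₀ : weight a b u = 0) (hv : NonnegPrefixes a b v) : NonnegPrefixes a b (u ++ v) := by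
  intro t
  rw [List.take_append, weight_append]
  rcases le_or_gt t u.length with h | h
  · simpa [Nat.sub_eq_zero_of_le h] using hu t
  · rw [List.take_of_length_le h.le, hu₀, zero_add]
    exact hv _

lemma NonnegPrefixes.drop {w : List Bool} (hw : NonnegPrefixes a b w) {r : ℕ}
    (hr : weight a b (w.take r) = 0) : NonnegPrefixes a b (w.drop r) := fun t => by
  simpa [weight_take_add, hr] using hw (r + t)

lemma add_pos_of_coprime (hco : Nat.Coprime (a + b) a) : 0 < a + b :=
  Nat.pos_of_ne_zero fun h => by
    obtain ⟨rfl, rfl⟩ : a = 0 ∧ b = 0 := by omega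
    simp at hco

end Weight

section EastCounts

/-- For each south step of `w`, the number of east steps before it, followed by the total
number of east steps. This is a bijection from words onto nonempty sorted lists. -/
def eastCounts : List Bool → List ℕ
  | [] => [0]
  | true :: w => 0 :: eastCounts w
  | false :: w => (eastCounts w).map (· + 1)

@[simp] lemma length_eastCounts (w : List Bool) :
    (eastCounts w).length = w.count true + 1 := by
  induction w with
  | nil => rfl
  | cons x w ih => cases x <;> simp [eastCounts, ih]

@[simp] lemma eastCounts_ne_nil (w : List Bool) : eastCounts w ≠ [] :=
  List.ne_nil_of_length_pos (by simp)

lemma getElem_eastCounts_count_true (w : List Bool) :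
    (eastCounts w)[w.count true]'(by simp) = w.count false := by
  induction w with
  | nil => rfl
  | cons x w ih => cases x <;> simp [eastCounts, ih]

lemma pairwise_eastCounts (w : List Bool) : (eastCounts w).Pairwise (· ≤ ·) := by
  induction w with
  | nil => simp [eastCounts]
  | cons x w ih => cases x <;> simp [eastCounts, List.pairwise_map, ih]

lemma eastCounts_injective : Function.Injective eastCounts := by
  intro u
  induction u with
  | nil => intro v h; cases v with
    | nil => rfl
    | cons y v => cases y <;> cases hv : eastCounts v <;> simp_all [eastCounts]
  | cons x u ih => intro v h; cases v with
    | nil => cases x <;> cases hu : eastCounts u <;> simp_all [eastCounts]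
    | cons y v =>
      cases x <;> cases y <;> simp only [eastCounts, List.cons.injEq] at h
      · rw [ih (List.map_injective_iff.mpr (add_left_injective 1) h)]
      · cases hu : eastCounts u <;> simp_all
      · cases hv : eastCounts v <;> simp_all
      · rw [ih h.2]

lemma eastCounts_replicate_false_append (n : ℕ) (w : List Bool) :
    eastCounts (List.replicate n false ++ w) = (eastCounts w).map (· + n) := by
  induction n with
  | zero => simp
  | succ n ih => simp [List.replicate_succ, eastCounts, ih]

lemma exists_eastCounts_eq_map_sub (v : List ℕ) (c : ℕ) (hv : v ≠ [])
    (hs : v.Pairwise (· ≤ ·)) (hc : ∀ x ∈ v, c ≤ x) : ∃ w, eastCounts w = v.map (· - c) := by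
  induction v generalizing c with
  | nil => exact absurd rfl hv
  | cons x v ih =>
    rw [List.pairwise_cons] at hs
    obtain ⟨w, hw⟩ : ∃ w, eastCounts w = 0 :: v.map (· - x) := by
      rcases eq_or_ne v [] with rfl | hv'
      · exact ⟨[], rfl⟩
      · obtain ⟨w, hw⟩ := ih x hv' hs.2 hs.1
        exact ⟨true :: w, by rw [eastCounts, hw]⟩
    refine ⟨List.replicate (x - c) false ++ w, ?_⟩
    have hxc := hc x List.mem_cons_self
    simp only [eastCounts_replicate_false_append, hw, List.map_cons, List.map_map, zero_add,
      List.cons.injEq, true_and]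
    refine List.map_congr_left fun y hy => ?_
    have := hs.1 y hy
    simp only [Function.comp_apply]
    omega

lemma exists_eastCounts_eq {v : List ℕ} (hv : v ≠ []) (hs : v.Pairwise (· ≤ ·)) :
    ∃ w, eastCounts w = v := by
  simpa using exists_eastCounts_eq_map_sub v 0 hv hs (by simp)

variable {a b : ℕ}

/-- Prefix weights are minimal just before a south step and at the end, where the weight is
`b p - a (eastCounts w)[p]`. -/
lemma nonneg_add_weight_take_iff (h : ℤ) (w : List Bool) :
    (∀ k, 0 ≤ h + weight a b (w.take k)) ↔
      ∀ p (hp : p < (eastCounts w).length), (a : ℤ) * (eastCounts w)[p] ≤ h + b * p := by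
  induction w generalizing h with
  | nil => simp [eastCounts]
  | cons x w ih =>
    rw [← Nat.and_forall_add_one]
    simp only [List.take_zero, weight_nil, add_zero, List.take_succ_cons, weight_cons,
      ← add_assoc, ih]
    cases x
    · simp only [eastCounts, Bool.false_eq_true, if_false, List.length_map, List.getElem_map,
        length_eastCounts, Nat.lt_succ_iff]
      push_cast
      refine ⟨fun H p hp => by linarith [H.2 p hp],
        fun H => ⟨?_, fun p hp => by linarith [H p hp]⟩⟩
      have h₀ := H 0 (Nat.zero_le _)
      have : (0 : ℤ) ≤ a * ((eastCounts w)[0] + 1) := by positivity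
      simp only [CharP.cast_eq_zero, mul_zero, add_zero] at h₀
      linarith
    · simp only [eastCounts, if_true, length_eastCounts, List.length_cons, Nat.lt_succ_iff]
      constructor
      · rintro ⟨h₀, H⟩ (_ | p) hp
        · simpa using h₀
        · simp only [List.getElem_cons_succ]
          push_cast
          linarith [H p (by omega)]
      · intro H
        refine ⟨by simpa using H 0 (by omega), fun p hp => ?_⟩
        have := H (p + 1) (by omega)
        simp only [List.getElem_cons_succ] at this
        push_cast at this
        linarith

lemma nonnegPrefixes_iff_eastCounts {w : List Bool} :
    NonnegPrefixes a b w ↔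
      ∀ p (hp : p < (eastCounts w).length), a * (eastCounts w)[p] ≤ b * p := by
  have := nonneg_add_weight_take_iff (a := a) (b := b) 0 w
  simp only [zero_add] at this
  unfold NonnegPrefixes
  exact_mod_cast this

end EastCounts

section DyckPaths

variable {m n : ℕ}

open scoped Classical in
noncomputable def dyckPaths (m n : ℕ) : Finset (List Bool) :=
  {w ∈ words (m + n) | w.count true = m ∧ NonnegPrefixes m n w}

lemma mem_dyckPaths {w : List Bool} :
    w ∈ dyckPaths m n ↔ w.length = m + n ∧ w.count true = m ∧ NonnegPrefixes m n w := by
  simp [dyckPaths]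

lemma mem_dyckPaths_iff_count {w : List Bool} :
    w ∈ dyckPaths m n ↔ w.count true = m ∧ w.count false = n ∧ NonnegPrefixes m n w := by
  rw [mem_dyckPaths, ← List.count_true_add_count_false w]
  constructor
  · rintro ⟨hl, rfl, h⟩; exact ⟨rfl, by omega, h⟩
  · rintro ⟨rfl, rfl, h⟩; exact ⟨rfl, rfl, h⟩

lemma getElem_cons_ofFn_append_succ (c : Fin (m - 1) → ℕ) (l : ℕ) (hl : l < m - 1) :
    (0 :: List.ofFn c ++ [n])[l + 1]'(by simp; omega) = c ⟨l, hl⟩ := by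
  rw [List.getElem_append_left (by simpa using hl), List.getElem_cons_succ, List.getElem_ofFn]

lemma pairwise_cons_ofFn_append_iff (c : Fin (m - 1) → ℕ) :
    (0 :: List.ofFn c ++ [n]).Pairwise (· ≤ ·) ↔ Monotone c ∧ ∀ l, c l ≤ n := by
  simp [List.pairwise_append, List.pairwise_ofFn, ← monotone_iff_forall_lt]

lemma forall_mul_getElem_cons_ofFn_append_le_iff (hm : 0 < m) (c : Fin (m - 1) → ℕ) :
    (∀ p (hp : p < (0 :: List.ofFn c ++ [n]).length),
        m * (0 :: List.ofFn c ++ [n])[p] ≤ n * p) ↔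
      ∀ l, c l ≤ n * (l + 1) / m := by
  simp only [Nat.le_div_iff_mul_le hm, mul_comm _ m]
  constructor
  · intro H l
    simpa [getElem_cons_ofFn_append_succ] using H (l + 1) (by simp)
  · intro H p hp
    simp only [List.length_append, List.length_cons, List.length_ofFn, List.length_nil] at hp
    rcases Nat.eq_zero_or_pos p with rfl | hp₀
    · simp
    rcases eq_or_lt_of_le (show p ≤ m by omega) with rfl | hpm
    · rw [List.getElem_append_right (by simp; omega)]
      simp [mul_comm]
    · obtain ⟨l, rfl⟩ : ∃ l, p = l + 1 := ⟨p - 1, by omega⟩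
      rw [getElem_cons_ofFn_append_succ _ l (by omega)]
      exact H ⟨l, by omega⟩

lemma eastCounts_eq_of_mem_dyckPaths (hm : 0 < m) {w : List Bool} (hw : w ∈ dyckPaths m n) :
    eastCounts w =
      0 :: List.ofFn (fun l : Fin (m - 1) => (eastCounts w).getD (l + 1) 0) ++ [n] := by
  obtain ⟨ht, hf, hw⟩ := mem_dyckPaths_iff_count.mp hw
  rw [nonnegPrefixes_iff_eastCounts] at hw
  have hlen : (eastCounts w).length = m + 1 := by simp [ht]
  refine List.ext_getElem (by simp [hlen]; omega) fun p hp _ => ?_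
  rcases Nat.eq_zero_or_pos p with rfl | hp₀
  · simpa [hm.ne'] using hw 0 hp
  rcases eq_or_lt_of_le (Nat.lt_succ_iff.mp (hlen ▸ hp)) with rfl | hpm
  · simp only [← hf, ← getElem_eastCounts_count_true w, ht]
    rw [List.getElem_append_right (by simp; omega)]
    simp
  · obtain ⟨l, rfl⟩ : ∃ l, p = l + 1 := ⟨p - 1, by omega⟩
    rw [getElem_cons_ofFn_append_succ _ l (by omega), List.getD_eq_getElem]

lemma exists_mem_dyckPaths_eastCounts_eq (hm : 0 < m) {c : Fin (m - 1) → ℕ}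
    (hmono : Monotone c) (hbound : ∀ l, c l ≤ n * (l + 1) / m) :
    ∃ w ∈ dyckPaths m n, eastCounts w = 0 :: List.ofFn c ++ [n] := by
  have hcn (l : Fin (m - 1)) : c l ≤ n := by
    refine Nat.le_of_mul_le_mul_right (((Nat.le_div_iff_mul_le hm).mp (hbound l)).trans ?_) hm
    exact Nat.mul_le_mul_left _ (by omega)
  obtain ⟨w, hw⟩ := exists_eastCounts_eq (by simp)
    ((pairwise_cons_ofFn_append_iff c).mpr ⟨hmono, hcn⟩)
  have ht : w.count true = m := by
    have := congrArg List.length hw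
    simp at this
    omega
  have hf : w.count false = n := by
    have := getElem_eastCounts_count_true w
    simp only [hw] at this
    rw [← this, List.getElem_append_right (by simp; omega)]
    simp
  refine ⟨w, mem_dyckPaths_iff_count.mpr ⟨ht, hf, ?_⟩, hw⟩
  rw [nonnegPrefixes_iff_eastCounts, hw]
  exact (forall_mul_getElem_cons_ofFn_append_le_iff hm c).mpr hbound

theorem dyckCount_eq_card_dyckPaths (hm : 0 < m) : dyckCount m n = #(dyckPaths m n) := by
  let f (w : dyckPaths m n) : Fin (m - 1) → ℕ := fun l => (eastCounts w).getD (l + 1) 0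
  have hf (w : dyckPaths m n) : eastCounts w = 0 :: List.ofFn (f w) ++ [n] :=
    eastCounts_eq_of_mem_dyckPaths hm w.2
  have hfS (w : dyckPaths m n) : Monotone (f w) ∧ ∀ l, f w l ≤ n * (l + 1) / m := by
    have hpair := pairwise_eastCounts w
    have hbound := nonnegPrefixes_iff_eastCounts.mp (mem_dyckPaths_iff_count.mp w.2).2.2
    rw [hf] at hpair hbound
    exact ⟨((pairwise_cons_ofFn_append_iff _).mp hpair).1,
      (forall_mul_getElem_cons_ofFn_append_le_iff hm _).mp hbound⟩
  let F : dyckPaths m n → {c : Fin (m - 1) → ℕ // Monotone c ∧ ∀ l, c l ≤ n * (l + 1) / m} :=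
    fun w => ⟨f w, hfS w⟩
  have hinj : F.Injective := fun w₁ w₂ h => Subtype.ext <| eastCounts_injective <| by
    rw [hf, hf, show f w₁ = f w₂ from congrArg Subtype.val h]
  have hsurj : F.Surjective := by
    rintro ⟨c, hmono, hbound⟩
    obtain ⟨w, hw, hwc⟩ := exists_mem_dyckPaths_eastCounts_eq hm hmono hbound
    refine ⟨⟨w, hw⟩, Subtype.ext (funext fun l => ?_)⟩
    change (eastCounts w).getD (l + 1) 0 = c l
    rw [hwc, List.getD_eq_getElem _ _ (by simp), getElem_cons_ofFn_append_succ _ _ l.2]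
  rw [dyckCount, ← Nat.card_eq_finsetCard]
  exact (Nat.card_congr (Equiv.ofBijective F ⟨hinj, hsurj⟩)).symm

end DyckPaths

section Rotation

variable {a b : ℕ}

lemma weight_take_rotate_of_le_sub {w : List Bool} {n t : ℕ} (hn : n ≤ w.length)
    (ht : t ≤ w.length - n) :
    weight a b ((w.rotate n).take t) = weight a b (w.take (n + t)) - weight a b (w.take n) := by
  rw [List.rotate_eq_drop_append_take hn, List.take_append,
    Nat.sub_eq_zero_of_le (by simpa using ht), List.take_zero, List.append_nil, weight_take_add]
  ring

lemma weight_take_rotate_of_sub_le {w : List Bool} {n t : ℕ} (hn : n ≤ w.length)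
    (ht₁ : w.length - n ≤ t) (ht₂ : t ≤ w.length) :
    weight a b ((w.rotate n).take t) =
      weight a b w - weight a b (w.take n) + weight a b (w.take (t - (w.length - n))) := by
  rw [List.rotate_eq_drop_append_take hn, List.take_append, List.length_drop,
    List.take_of_length_le (by simpa using ht₁), List.take_take,
    Nat.min_eq_left (by omega : t - (w.length - n) ≤ n), weight_append]
  have := weight_append (a := a) (b := b) (w.take n) (w.drop n)
  rw [List.take_append_drop] at this
  omega

end Rotation

section FirstReturn

variable (a b : ℕ)

noncomputable def firstReturn (w : List Bool) (k : ℕ) : ℕ :=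
  sInf {t | k < t ∧ weight a b (w.take t) = 0}

variable {a b} {w : List Bool} {k : ℕ}

lemma firstReturn_spec (hw : weight a b w = 0) (hk : k < w.length) :
    k < firstReturn a b w k ∧ firstReturn a b w k ≤ w.length ∧
      weight a b (w.take (firstReturn a b w k)) = 0 := by
  have hmem : w.length ∈ {t | k < t ∧ weight a b (w.take t) = 0} := ⟨hk, by simpa using hw⟩
  obtain ⟨h₁, h₂⟩ := Nat.sInf_mem ⟨_, hmem⟩
  exact ⟨h₁, Nat.sInf_le hmem, h₂⟩

lemma weight_take_ne_zero_of_lt_firstReturn {t : ℕ} (h₁ : k < t)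
    (h₂ : t < firstReturn a b w k) : weight a b (w.take t) ≠ 0 :=
  fun h => Nat.notMem_of_lt_sInf h₂ ⟨h₁, h⟩

lemma firstReturn_eq {r : ℕ} (h₁ : k < r) (h₂ : weight a b (w.take r) = 0)
    (h₃ : ∀ t, k < t → t < r → weight a b (w.take t) ≠ 0) : firstReturn a b w k = r := by
  refine le_antisymm (Nat.sInf_le ⟨h₁, h₂⟩) (not_lt.mp fun hlt => ?_)
  obtain ⟨hk, h₀⟩ :=
    Nat.sInf_mem (⟨r, h₁, h₂⟩ : {t | k < t ∧ weight a b (w.take t) = 0}.Nonempty)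
  exact h₃ _ hk hlt h₀

lemma dvd_firstReturn (hco : Nat.Coprime (a + b) a) (hw : weight a b w = 0)
    (hk : k < w.length) : a + b ∣ firstReturn a b w k := by
  obtain ⟨-, hr, h₀⟩ := firstReturn_spec hw hk
  simpa [Nat.min_eq_left hr] using dvd_length_of_weight_eq_zero hco h₀

end FirstReturn

section FirstMin

variable (a b : ℕ)

def IsPrefixMin (w : List Bool) (t : ℕ) : Prop :=
  1 ≤ t ∧ t ≤ w.length ∧
    ∀ s, 1 ≤ s → s ≤ w.length → weight a b (w.take t) ≤ weight a b (w.take s)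

noncomputable def firstMin (w : List Bool) : ℕ := sInf {t | IsPrefixMin a b w t}

variable {a b} {w : List Bool}

lemma isPrefixMin_firstMin (hw : w ≠ []) : IsPrefixMin a b w (firstMin a b w) := by
  refine Nat.sInf_mem (s := {t | IsPrefixMin a b w t}) ?_
  obtain ⟨t, ht, hmin⟩ := exists_min_image (Icc 1 w.length) (fun t => weight a b (w.take t))
    ⟨1, by simpa [Nat.one_le_iff_ne_zero] using hw⟩
  rw [mem_Icc] at ht
  exact ⟨t, ht.1, ht.2, fun s hs₁ hs₂ => hmin s (mem_Icc.mpr ⟨hs₁, hs₂⟩)⟩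

lemma weight_take_firstMin_lt (hw : w ≠ []) {s : ℕ} (hs₁ : 1 ≤ s) (hs₂ : s < firstMin a b w) :
    weight a b (w.take (firstMin a b w)) < weight a b (w.take s) := by
  obtain ⟨-, hle, hmin⟩ := isPrefixMin_firstMin (a := a) (b := b) hw
  have hs : ¬ IsPrefixMin a b w s := Nat.notMem_of_lt_sInf hs₂
  simp only [IsPrefixMin, not_and, not_forall, not_le] at hs
  obtain ⟨s', hs'₁, hs'₂, hlt⟩ := hs hs₁ (by omega)
  exact (hmin s' hs'₁ hs'₂).trans_lt hlt

lemma firstMin_eq {t : ℕ} (ht : IsPrefixMin a b w t)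
    (hlt : ∀ s, 1 ≤ s → s < t → weight a b (w.take t) < weight a b (w.take s)) :
    firstMin a b w = t := by
  refine le_antisymm (Nat.sInf_le ht) (not_lt.mp fun hs => ?_)
  obtain ⟨h₁, -, hmin⟩ := Nat.sInf_mem (⟨t, ht⟩ : {t | IsPrefixMin a b w t}.Nonempty)
  exact (hlt _ h₁ hs).not_ge (hmin t ht.1 ht.2.1)

lemma nonnegPrefixes_rotate_firstMin (hw : w ≠ []) (h₀ : weight a b w = 0) :
    NonnegPrefixes a b (w.rotate (firstMin a b w)) := by
  obtain ⟨hp₁, hp₂, hmin⟩ := isPrefixMin_firstMin (a := a) (b := b) hw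
  intro t
  rcases le_or_gt w.length t with h | h
  · rw [List.take_of_length_le (by simpa using h), weight_rotate, h₀]
  rcases le_or_gt t (w.length - firstMin a b w) with h' | h'
  · rw [weight_take_rotate_of_le_sub hp₂ h']
    linarith [hmin (firstMin a b w + t) (by omega) (by omega)]
  · rw [weight_take_rotate_of_sub_le hp₂ h'.le h.le, h₀]
    linarith [hmin (t - (w.length - firstMin a b w)) (by omega) (by omega)]

lemma weight_take_rotate_firstMin_pos (hw : w ≠ []) (h₀ : weight a b w = 0) {t : ℕ}
    (h₁ : w.length - firstMin a b w < t) (h₂ : t < w.length) :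
    0 < weight a b ((w.rotate (firstMin a b w)).take t) := by
  obtain ⟨hp₁, hp₂, -⟩ := isPrefixMin_firstMin (a := a) (b := b) hw
  rw [weight_take_rotate_of_sub_le hp₂ h₁.le h₂.le, h₀]
  linarith [weight_take_firstMin_lt (a := a) (b := b) hw
    (s := t - (w.length - firstMin a b w)) (by omega) (by omega)]

end FirstMin

section CycleLemma

variable (a b : ℕ)

def balancedWords (j : ℕ) : Finset (List Bool) :=
  {w ∈ words (j * (a + b)) | weight a b w = 0}

open scoped Classical in
noncomputable def dyckWords (j : ℕ) : Finset (List Bool) :=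
  {w ∈ balancedWords a b j | NonnegPrefixes a b w}

noncomputable def cut (p : List Bool × ℕ) : List Bool × List Bool :=
  ((p.1.take (firstReturn a b p.1 p.2)).rotate p.2, p.1.drop (firstReturn a b p.1 p.2))

noncomputable def glue (q : List Bool × List Bool) : List Bool × ℕ :=
  (q.1.rotate (firstMin a b q.1) ++ q.2, q.1.length - firstMin a b q.1)

variable {a b} {w : List Bool} {j d : ℕ}

lemma mem_balancedWords :
    w ∈ balancedWords a b j ↔ w.length = j * (a + b) ∧ weight a b w = 0 := by
  simp [balancedWords]

lemma mem_dyckWords :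
    w ∈ dyckWords a b j ↔ w.length = j * (a + b) ∧ weight a b w = 0 ∧ NonnegPrefixes a b w := by
  simp [dyckWords, mem_balancedWords, and_assoc]

lemma card_balancedWords (hab : 0 < a + b) (j : ℕ) :
    #(balancedWords a b j) = (j * (a + b)).choose (j * a) := by
  rw [← card_words_filter_count_true, balancedWords]
  exact congrArg card (filter_congr fun w hw => weight_eq_zero_iff hab (mem_words.mp hw))

lemma dyckWords_zero : dyckWords a b 0 = {[]} := by
  ext w
  simp only [mem_dyckWords, zero_mul, List.length_eq_zero_iff, mem_singleton]
  constructor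
  · exact fun h => h.1
  · rintro rfl
    exact ⟨rfl, weight_nil, fun k => by simp⟩

lemma dyckWords_eq_dyckPaths (hab : 0 < a + b) (hd : 0 < d) :
    dyckWords a b d = dyckPaths (d * a) (d * b) := by
  ext w
  rw [mem_dyckWords, mem_dyckPaths, ← mul_add, nonnegPrefixes_mul_mul_iff hd]
  constructor
  · rintro ⟨hl, h₀, hnn⟩
    exact ⟨hl, (weight_eq_zero_iff hab hl).mp h₀, hnn⟩
  · rintro ⟨hl, ht, hnn⟩
    exact ⟨hl, (weight_eq_zero_iff hab hl).mpr ht, hnn⟩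

lemma glue_spec (hab : 0 < a + b) (hj : 1 ≤ j) (hjd : j ≤ d) {Q D : List Bool}
    (hQ : Q ∈ balancedWords a b j) (hD : D ∈ dyckWords a b (d - j)) :
    (glue a b (Q, D)).1 ∈ dyckWords a b d ∧ (glue a b (Q, D)).2 < d * (a + b) ∧
      firstReturn a b (glue a b (Q, D)).1 (glue a b (Q, D)).2 = Q.length := by
  obtain ⟨hQlen, hQ₀⟩ := mem_balancedWords.mp hQ
  obtain ⟨hDlen, hD₀, hDnn⟩ := mem_dyckWords.mp hD
  have hQne : Q ≠ [] := List.ne_nil_of_length_pos (by rw [hQlen]; positivity)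
  obtain ⟨hp₁, hp₂, -⟩ := isPrefixMin_firstMin (a := a) (b := b) hQne
  simp only [glue]
  set p := firstMin a b Q
  have hP₀ : weight a b (Q.rotate p) = 0 := by rw [weight_rotate, hQ₀]
  have hlen : Q.length ≤ d * (a + b) := hQlen ▸ Nat.mul_le_mul_right _ hjd
  refine ⟨mem_dyckWords.mpr ⟨?_, ?_, (nonnegPrefixes_rotate_firstMin hQne hQ₀).append hP₀ hDnn⟩,
    by omega, firstReturn_eq (by omega) ?_ fun t ht₁ ht₂ => ?_⟩
  · simp only [List.length_append, List.length_rotate, hQlen, hDlen, ← add_mul]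
    congr 1
    omega
  · simp [weight_append, hP₀, hD₀]
  · simpa [List.take_left' (List.length_rotate Q p)] using hP₀
  · simp only [List.take_append, List.length_rotate, Nat.sub_eq_zero_of_le ht₂.le,
      List.take_zero, List.append_nil]
    exact (weight_take_rotate_firstMin_pos hQne hQ₀ ht₁ ht₂).ne'

lemma firstMin_cut (hw : NonnegPrefixes a b w) (h₀ : weight a b w = 0) {k : ℕ}
    (hk : k < w.length) : firstMin a b (cut a b (w, k)).1 = firstReturn a b w k - k := by
  obtain ⟨hr₁, hr₂, hr₀⟩ := firstReturn_spec h₀ hk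
  simp only [cut]
  set r := firstReturn a b w k
  have hPlen : (w.take r).length = r := by simp [hr₂]
  have hlow (s : ℕ) (hs : s ≤ r - k) : weight a b (((w.take r).rotate k).take s) =
      weight a b (w.take (k + s)) - weight a b (w.take k) := by
    rw [weight_take_rotate_of_le_sub (by omega) (by omega), List.take_take, List.take_take,
      Nat.min_eq_left (by omega), Nat.min_eq_left (by omega)]
  have hhigh (s : ℕ) (hs₁ : r - k ≤ s) (hs₂ : s ≤ r) :
      weight a b (((w.take r).rotate k).take s) =
        weight a b (w.take (s - (r - k))) - weight a b (w.take k) := by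
    rw [weight_take_rotate_of_sub_le (by omega) (by omega) (by omega), hr₀, List.take_take,
      List.take_take, hPlen, Nat.min_eq_left (by omega), Nat.min_eq_left (by omega)]
    ring
  have hmin : weight a b (((w.take r).rotate k).take (r - k)) = -weight a b (w.take k) := by
    rw [hlow _ le_rfl, Nat.add_sub_cancel' hr₁.le, hr₀, zero_sub]
  refine firstMin_eq ⟨by omega, by simp; omega, fun s hs₁ hs₂ => ?_⟩ fun s hs₁ hs₂ => ?_
  · simp only [List.length_rotate, hPlen] at hs₂
    rw [hmin]
    rcases le_or_gt s (r - k) with h | h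
    · rw [hlow s h]; linarith [hw (k + s)]
    · rw [hhigh s h.le hs₂]; linarith [hw (s - (r - k))]
  · rw [hmin, hlow s hs₂.le]
    have hne := weight_take_ne_zero_of_lt_firstReturn (a := a) (b := b) (w := w)
      (by omega : k < k + s) (by omega)
    linarith [lt_of_le_of_ne (hw (k + s)) hne.symm]

lemma cut_spec (hco : Nat.Coprime (a + b) a) (hw : w ∈ dyckWords a b d) {k : ℕ}
    (hk : k < w.length) :
    1 ≤ firstReturn a b w k / (a + b) ∧ firstReturn a b w k / (a + b) ≤ d ∧
      (cut a b (w, k)).1 ∈ balancedWords a b (firstReturn a b w k / (a + b)) ∧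
      (cut a b (w, k)).2 ∈ dyckWords a b (d - firstReturn a b w k / (a + b)) := by
  obtain ⟨hlen, h₀, hnn⟩ := mem_dyckWords.mp hw
  obtain ⟨hr₁, hr₂, hr₀⟩ := firstReturn_spec h₀ hk
  obtain ⟨j, hj⟩ := dvd_firstReturn hco h₀ hk
  have hab := add_pos_of_coprime hco
  rw [hj, Nat.mul_div_cancel_left _ hab]
  have hjd : j ≤ d :=
    Nat.le_of_mul_le_mul_left (by rw [← hj, mul_comm, ← hlen]; exact hr₂) hab
  refine ⟨Nat.pos_of_ne_zero fun h => by simp [h] at hj; omega, hjd,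
    mem_balancedWords.mpr ⟨?_, ?_⟩, mem_dyckWords.mpr ⟨?_, ?_, hnn.drop hr₀⟩⟩
  · rw [cut, List.length_rotate, List.length_take, Nat.min_eq_left hr₂, hj, mul_comm]
  · simpa [cut, weight_rotate] using hr₀
  · simp only [cut, List.length_drop, hlen, hj, mul_comm (a + b) j, Nat.sub_mul]
  · have := weight_append (a := a) (b := b) (w.take (firstReturn a b w k))
      (w.drop (firstReturn a b w k))
    simp only [List.take_append_drop, h₀, hr₀, zero_add] at this
    simpa [cut] using this.symm

lemma glue_cut (hw : NonnegPrefixes a b w) (h₀ : weight a b w = 0) {k : ℕ}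
    (hk : k < w.length) : glue a b (cut a b (w, k)) = (w, k) := by
  obtain ⟨hr₁, hr₂, -⟩ := firstReturn_spec h₀ hk
  have hPlen : (w.take (firstReturn a b w k)).length = firstReturn a b w k := by simp [hr₂]
  rw [glue, firstMin_cut hw h₀ hk]
  simp only [cut, List.rotate_rotate, List.length_rotate, hPlen, Nat.add_sub_cancel' hr₁.le,
    Nat.sub_sub_self hr₁.le, Prod.mk.injEq, and_true]
  have hrot := List.rotate_length (w.take (firstReturn a b w k))
  rw [hPlen] at hrot
  rw [hrot, List.take_append_drop]

lemma cut_glue (hab : 0 < a + b) (hj : 1 ≤ j) (hjd : j ≤ d) {Q D : List Bool}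
    (hQ : Q ∈ balancedWords a b j) (hD : D ∈ dyckWords a b (d - j)) :
    cut a b (glue a b (Q, D)) = (Q, D) := by
  have hret := (glue_spec hab hj hjd hQ hD).2.2
  have hQne : Q ≠ [] := List.ne_nil_of_length_pos <| by
    rw [(mem_balancedWords.mp hQ).1]; exact Nat.mul_pos hj hab
  have hp := (isPrefixMin_firstMin (a := a) (b := b) hQne).2.1
  rw [cut, hret]
  simp only [glue, List.take_left' (List.length_rotate _ _),
    List.drop_left' (List.length_rotate _ _), List.rotate_rotate, Nat.add_sub_cancel' hp,
    List.rotate_length]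

theorem card_dyckWords_mul (hco : Nat.Coprime (a + b) a) (d : ℕ) :
    #(dyckWords a b d) * (d * (a + b)) =
      ∑ j ∈ Icc 1 d, (j * (a + b)).choose (j * a) * #(dyckWords a b (d - j)) := by
  have hab := add_pos_of_coprime hco
  have hmarked {p : List Bool × ℕ} (hp : p ∈ dyckWords a b d ×ˢ range (d * (a + b))) :
      p.1 ∈ dyckWords a b d ∧ p.2 < p.1.length := by
    rw [mem_product, mem_range] at hp
    exact ⟨hp.1, (mem_dyckWords.mp hp.1).1 ▸ hp.2⟩
  rw [← card_range (d * (a + b)), ← card_product,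
    card_eq_sum_card_fiberwise (f := fun p => firstReturn a b p.1 p.2 / (a + b)) (t := Icc 1 d)
      fun p hp => mem_Icc.mpr ⟨(cut_spec hco (hmarked hp).1 (hmarked hp).2).1,
        (cut_spec hco (hmarked hp).1 (hmarked hp).2).2.1⟩]
  refine sum_congr rfl fun j hj => ?_
  rw [mem_Icc] at hj
  rw [← card_balancedWords hab, ← card_product]
  refine card_bij' (fun p _ => cut a b p) (fun q _ => glue a b q) (fun p hp => ?_)
    (fun q hq => ?_) (fun p hp => ?_) (fun q hq => ?_)
  · rw [mem_filter] at hp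
    obtain ⟨-, -, h₁, h₂⟩ := cut_spec hco (hmarked hp.1).1 (hmarked hp.1).2
    rw [hp.2] at h₁ h₂
    exact mem_product.mpr ⟨h₁, h₂⟩
  · rw [mem_product] at hq
    obtain ⟨hw, hk, hret⟩ := glue_spec hab hj.1 hj.2 hq.1 hq.2
    rw [mem_filter, mem_product, mem_range, hret, (mem_balancedWords.mp hq.1).1,
      Nat.mul_div_cancel _ hab]
    exact ⟨⟨hw, hk⟩, rfl⟩
  · obtain ⟨hw, hk⟩ := hmarked (mem_filter.mp hp).1
    obtain ⟨-, h₀, hnn⟩ := mem_dyckWords.mp hw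
    exact glue_cut hnn h₀ hk
  · rw [mem_product] at hq
    exact cut_glue hab hj.1 hj.2 hq.1 hq.2

end CycleLemma

section Exp

variable {f G : ℚ⟦X⟧}

lemma expOf_eq_subst (hf : constantCoeff f = 0) : expOf f = (exp ℚ).subst f := by
  ext n
  rw [expOf, coeff_mk, map_sum, coeff_subst' (HasSubst.of_constantCoeff_zero' hf),
    finsum_eq_sum_of_support_subset (s := range (n + 1))]
  · simp [coeff_exp]
  · intro m hm
    by_contra hmn
    simp only [coe_range, Set.mem_Iio, not_lt] at hmn
    exact hm (show coeff m (exp ℚ) • coeff n (f ^ m) = 0 by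
      rw [(X_pow_dvd_iff.mp (pow_dvd_pow_of_dvd (X_dvd_iff.mpr hf) m)) n (by omega), smul_zero])

lemma derivative_expOf (hf : constantCoeff f = 0) :
    d⁄dX ℚ (expOf f) = expOf f * d⁄dX ℚ f := by
  rw [expOf_eq_subst hf, derivative_subst (HasSubst.of_constantCoeff_zero' hf), derivative_exp]

lemma constantCoeff_expOf : constantCoeff (expOf f) = 1 := by
  simp [expOf]

theorem eq_expOf_of_derivative_eq (hf : constantCoeff f = 0) (hG₀ : constantCoeff G = 1)
    (hG : d⁄dX ℚ G = G * d⁄dX ℚ f) : G = expOf f := by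
  have hE : constantCoeff (expOf f) ≠ 0 := by simp [constantCoeff_expOf]
  have hquot : G * (expOf f)⁻¹ = 1 := by
    refine derivative.ext ?_ (by simp [hG₀, constantCoeff_expOf])
    rw [Derivation.leibniz, derivative_inv', derivative_expOf hf, hG, derivative_one]
    simp only [smul_eq_mul]
    linear_combination (-(G * (expOf f)⁻¹ * d⁄dX ℚ f)) * PowerSeries.inv_mul_cancel _ hE
  calc G = G * (expOf f)⁻¹ * expOf f := by
        rw [mul_assoc, PowerSeries.inv_mul_cancel _ hE, mul_one]
    _ = expOf f := by rw [hquot, one_mul]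

end Exp

section Series

variable {a b : ℕ}

lemma sum_Icc_one_eq_sum_antidiagonal {M : Type*} [AddCommMonoid M] (n : ℕ)
    (g : ℕ → ℕ → M) :
    ∑ j ∈ Icc 1 (n + 1), g j (n + 1 - j) = ∑ p ∈ antidiagonal n, g (p.2 + 1) p.1 := by
  refine sum_nbij' (fun j => (n + 1 - j, j - 1)) (fun p => p.2 + 1) (fun j hj => ?_)
    (fun p hp => ?_) (fun j hj => ?_) (fun p hp => ?_) (fun j hj => ?_) <;>
    simp only [mem_Icc, HasAntidiagonal.mem_antidiagonal] at *
  · omega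
  · omega
  · omega
  · ext <;> simp only <;> omega
  · congr 1; omega

noncomputable def dyckSeries (a b : ℕ) : ℚ⟦X⟧ := mk fun d => (#(dyckWords a b d) : ℚ)

noncomputable def phiSeries (a b : ℕ) : ℚ⟦X⟧ :=
  mk fun j => if j = 0 then 0 else ((j * (a + b)).choose (j * a) : ℚ) / ((j * (a + b) : ℕ) : ℚ)

lemma constantCoeff_dyckSeries : constantCoeff (dyckSeries a b) = 1 := by
  simp [dyckSeries, dyckWords_zero]

lemma one_add_mk_dyckCount (ha : 0 < a) :
    1 + mk (fun d => if d = 0 then 0 else (dyckCount (d * a) (d * b) : ℚ)) = dyckSeries a b := by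
  ext (_ | d)
  · simp [dyckSeries, dyckWords_zero]
  · rw [map_add, coeff_one, coeff_mk, dyckSeries, coeff_mk, if_neg d.succ_ne_zero,
      if_neg d.succ_ne_zero, zero_add, dyckCount_eq_card_dyckPaths (by positivity),
      dyckWords_eq_dyckPaths (by omega) d.succ_pos]

lemma derivative_dyckSeries (hco : Nat.Coprime (a + b) a) :
    d⁄dX ℚ (dyckSeries a b) = dyckSeries a b * d⁄dX ℚ (phiSeries a b) := by
  have hab : (a + b : ℚ) ≠ 0 := by exact_mod_cast (add_pos_of_coprime hco).ne'
  ext n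
  have key := congrArg (Nat.cast (R := ℚ)) (card_dyckWords_mul hco (n + 1))
  rw [sum_Icc_one_eq_sum_antidiagonal n
    fun j i => (j * (a + b)).choose (j * a) * #(dyckWords a b i)] at key
  push_cast at key
  have hterm (p : ℕ × ℕ) : (#(dyckWords a b p.1) : ℚ) * (coeff (p.2 + 1) (phiSeries a b) *
      (p.2 + 1)) =
      (((p.2 + 1) * (a + b)).choose ((p.2 + 1) * a) : ℚ) * #(dyckWords a b p.1) / (a + b) := by
    rw [phiSeries, coeff_mk, if_neg p.2.succ_ne_zero]
    push_cast
    field_simp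
  simp only [coeff_derivative, coeff_mul, dyckSeries, coeff_mk]
  rw [sum_congr rfl fun p _ => hterm p, ← sum_div, ← key]
  field_simp

end Series

end Bizley

theorem bizley_formula_general (a b : ℕ) (ha : 0 < a) (h : Nat.gcd a b = 1) :
    (1 : PowerSeries ℚ) +
        PowerSeries.mk (fun d => if d = 0 then 0 else (dyckCount (d * a) (d * b) : ℚ)) =
      expOf (PowerSeries.mk fun j =>
        if j = 0 then 0 else ((j * (a + b)).choose (j * a) : ℚ) / ((j * (a + b) : ℕ) : ℚ)) := by
  have hco : Nat.Coprime (a + b) a := by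
    rw [add_comm, Nat.coprime_add_self_left]
    exact Nat.coprime_comm.mp h
  rw [Bizley.one_add_mk_dyckCount ha]
  exact Bizley.eq_expOf_of_derivative_eq (by simp) Bizley.constantCoeff_dyckSeries
    (Bizley.derivative_dyckSeries hco)

theorem bizley_formula (a b : ℕ) (ha : 0 < a) (hb : 0 < b) (h : Nat.gcd a b = 1) :
    (1 : PowerSeries ℚ) +
        PowerSeries.mk (fun d => if d = 0 then 0 else (dyckCount (d * a) (d * b) : ℚ)) =
      expOf (PowerSeries.mk fun j =>
        if j = 0 then 0 else ((j * (a + b)).choose (j * a) : ℚ) / ((j * (a + b) : ℕ) : ℚ)) :=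
  bizley_formula_general a b ha h
end
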